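/- arXiv:1007.0097 — 10 statements merged into one kernel-verified Lean document; each statement's English description precedes it below -/
import Mathlib

section
/- Let f, g : (0,∞) → ℝ be convex with f(1) = g(1) = 0, and suppose the limits f(0), f*(0), g(0), g*(0) all exist as finite reals. Then the set A := {(D_f(P,Q), D_g(P,Q)) ∈ ℝ² : n ∈ ℕ, P and Q probability vectors of length n} of (f,g)-achievable points is a convex subset of ℝ². -/
open Finset Filter Topology

/-- A probability vector of length `n`: nonnegative entries summing to 1. -/
def IsProbVec {n : ℕ} (P : Fin n → ℝ) : Prop :=
  (∀ i, 0 ≤ P i) ∧ ∑ i, P i = 1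

/-- The `f`-divergence of two probability vectors, where `f0` stands for the limit
`f(0) = lim_{t→0+} f(t)` and `fstar0` for `f*(0) = lim_{t→∞} f(t)/t`. -/
noncomputable def fDiv {n : ℕ} (f : ℝ → ℝ) (f0 fstar0 : ℝ) (P Q : Fin n → ℝ) : ℝ :=
  ∑ i, if 0 < Q i then Q i * (if 0 < P i then f (P i / Q i) else f0) else fstar0 * P i

lemma term_scale (f : ℝ → ℝ) (f0 fstar0 : ℝ) {c p q : ℝ} (hc : 0 ≤ c) :
    (if 0 < c*q then c*q * (if 0 < c*p then f (c*p/(c*q)) else f0) else fstar0 * (c*p))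
    = c * (if 0 < q then q * (if 0 < p then f (p/q) else f0) else fstar0 * p) := by
  rcases hc.lt_or_eq with hc | hc
  · have hq : 0 < c*q ↔ 0 < q := mul_pos_iff_of_pos_left hc
    have hp : 0 < c*p ↔ 0 < p := mul_pos_iff_of_pos_left hc
    have hr : c*p/(c*q) = p/q := mul_div_mul_left _ _ hc.ne'
    simp only [hq, hp, hr]
    split
    · split <;> ring
    · ring
  · subst hc
    simp

lemma fDiv_mix {n m : ℕ} (f : ℝ → ℝ) (f0 fstar0 : ℝ) (P₁ Q₁ : Fin n → ℝ) (P₂ Q₂ : Fin m → ℝ)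
    {a b : ℝ} (ha : 0 ≤ a) (hb : 0 ≤ b) :
    fDiv f f0 fstar0 (Fin.append (a • P₁) (b • P₂)) (Fin.append (a • Q₁) (b • Q₂))
    = a * fDiv f f0 fstar0 P₁ Q₁ + b * fDiv f f0 fstar0 P₂ Q₂ := by
  unfold fDiv
  rw [Fin.sum_univ_add, Finset.mul_sum, Finset.mul_sum]
  congr 1 <;> apply Finset.sum_congr rfl <;> intro i _
  · simp only [Fin.append_left, Pi.smul_apply, smul_eq_mul]
    exact term_scale f f0 fstar0 ha
  · simp only [Fin.append_right, Pi.smul_apply, smul_eq_mul]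
    exact term_scale f f0 fstar0 hb

lemma isProbVec_mix {n m : ℕ} {P₁ : Fin n → ℝ} {P₂ : Fin m → ℝ}
    (h₁ : IsProbVec P₁) (h₂ : IsProbVec P₂) {a b : ℝ} (ha : 0 ≤ a) (hb : 0 ≤ b)
    (hab : a + b = 1) : IsProbVec (Fin.append (a • P₁) (b • P₂)) := by
  constructor
  · intro i
    refine Fin.addCases (fun j => ?_) (fun j => ?_) i
    · simp only [Fin.append_left, Pi.smul_apply, smul_eq_mul]
      exact mul_nonneg ha (h₁.1 j)
    · simp only [Fin.append_right, Pi.smul_apply, smul_eq_mul]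
      exact mul_nonneg hb (h₂.1 j)
  · rw [Fin.sum_univ_add]
    simp only [Fin.append_left, Fin.append_right, Pi.smul_apply, smul_eq_mul]
    rw [← Finset.mul_sum, ← Finset.mul_sum, h₁.2, h₂.2]
    linarith

/-- The set of `(f,g)`-achievable points is convex. -/
theorem achievable_points_convex (f g : ℝ → ℝ) (f0 fstar0 g0 gstar0 : ℝ)
    (hf : ConvexOn ℝ (Set.Ioi 0) f) (hf1 : f 1 = 0)
    (hg : ConvexOn ℝ (Set.Ioi 0) g) (hg1 : g 1 = 0)
    (hf0 : Tendsto f (𝓝[>] (0:ℝ)) (𝓝 f0))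
    (hfs : Tendsto (fun t => f t / t) atTop (𝓝 fstar0))
    (hg0 : Tendsto g (𝓝[>] (0:ℝ)) (𝓝 g0))
    (hgs : Tendsto (fun t => g t / t) atTop (𝓝 gstar0)) :
    Convex ℝ {xy : ℝ × ℝ | ∃ (n : ℕ) (P Q : Fin n → ℝ), IsProbVec P ∧ IsProbVec Q ∧
      xy = (fDiv f f0 fstar0 P Q, fDiv g g0 gstar0 P Q)} := by
  rintro x ⟨n, P₁, Q₁, hP₁, hQ₁, rfl⟩ y ⟨m, P₂, Q₂, hP₂, hQ₂, rfl⟩ a b ha hb hab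
  refine ⟨n + m, Fin.append (a • P₁) (b • P₂), Fin.append (a • Q₁) (b • Q₂),
    isProbVec_mix hP₁ hP₂ ha hb hab, isProbVec_mix hQ₁ hQ₂ ha hb hab, ?_⟩
  rw [fDiv_mix f f0 fstar0 P₁ Q₁ P₂ Q₂ ha hb, fDiv_mix g g0 gstar0 P₁ Q₁ P₂ Q₂ ha hb]
  simp [Prod.ext_iff, smul_eq_mul]
end

section
/- Let f, g : (0,∞) → ℝ be convex with f(1) = g(1) = 0, and suppose the limits f(0), f*(0), g(0), g*(0) all exist as finite reals. Then every (f,g)-achievable point is 4-achievable: for every n and all probability vectors P, Q of length n there exist probability vectors P', Q' of length 4 such that D_f(P',Q') = D_f(P,Q) and D_g(P',Q') = D_g(P,Q). -/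
open Finset Filter Topology

/-!
The pair `(D_f(P,Q), D_g(P,Q))`, together with the two totals `∑ pᵢ = ∑ qᵢ = 1`, is a sum of `n`
vectors `(pᵢ, qᵢ, qᵢ f(pᵢ/qᵢ), qᵢ g(pᵢ/qᵢ))` in `ℝ⁴`. The set of such vectors is invariant under scaling
by `c ≥ 0`, because each summand of an `f`-divergence is positively homogeneous in `(p, q)`. A
conic version of Carathéodory's theorem then rewrites any finite sum of elements of such a set in
`ℝ⁴` as a sum of four of them: while there are more summands than the dimension, a linear relation
among them lets one rescale them by nonnegative factors, one of which vanishes, without changing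
the sum. The four resulting pairs `(p, q)` are the required probability vectors.
-/

section ConicCaratheodory

variable {𝕜 V : Type*} [Field 𝕜] [LinearOrder 𝕜] [IsStrictOrderedRing 𝕜]
  [AddCommGroup V] [Module 𝕜 V]

theorem exists_nonneg_sum_smul_eq_sum_of_not_linearIndependent {ι : Type*} [Fintype ι]
    {v : ι → V} (hv : ¬ LinearIndependent 𝕜 v) :
    ∃ c : ι → 𝕜, (∀ i, 0 ≤ c i) ∧ (∃ i, c i = 0) ∧ ∑ i, c i • v i = ∑ i, v i := by
  obtain ⟨g, hg, i, hi⟩ := Fintype.not_linearIndependent_iff.mp hv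
  wlog hpos : 0 < g i generalizing g
  · exact this (-g) (by simp [neg_smul, hg]) (neg_ne_zero.mpr hi)
      (neg_pos.mpr (lt_of_le_of_ne (not_lt.mp hpos) hi))
  have : Nonempty ι := ⟨i⟩
  obtain ⟨i₀, hmax⟩ := Finite.exists_max g
  have hg₀ : 0 < g i₀ := hpos.trans_le (hmax i)
  refine ⟨fun j => 1 - g j / g i₀, fun j => sub_nonneg.mpr ((div_le_one hg₀).mpr (hmax j)),
    ⟨i₀, by simp [hg₀.ne']⟩, ?_⟩
  simp only [sub_smul, one_smul, Finset.sum_sub_distrib, div_eq_inv_mul, mul_smul,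
    ← Finset.smul_sum, hg, smul_zero, sub_zero]

variable [FiniteDimensional 𝕜 V] {K : Set V}

theorem exists_sum_fin_eq_sum_fin_succ (hK : ∀ c : 𝕜, 0 ≤ c → ∀ x ∈ K, c • x ∈ K) {m : ℕ}
    (hm : Module.finrank 𝕜 V ≤ m) (v : Fin (m + 1) → V) (hv : ∀ i, v i ∈ K) :
    ∃ w : Fin m → V, (∀ j, w j ∈ K) ∧ ∑ j, w j = ∑ i, v i := by
  have hdep : ¬ LinearIndependent 𝕜 v := fun h => by
    simpa using h.fintype_card_le_finrank.trans hm
  obtain ⟨c, hc, ⟨i₀, hi₀⟩, hsum⟩ := exists_nonneg_sum_smul_eq_sum_of_not_linearIndependent hdep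
  refine ⟨fun j => c (i₀.succAbove j) • v (i₀.succAbove j), fun j => hK _ (hc _) _ (hv _), ?_⟩
  rw [← hsum, Fin.sum_univ_succAbove _ i₀, hi₀, zero_smul, zero_add]

theorem exists_sum_fin_eq_sum (h0 : (0 : V) ∈ K) (hK : ∀ c : 𝕜, 0 ≤ c → ∀ x ∈ K, c • x ∈ K)
    {m : ℕ} (hm : Module.finrank 𝕜 V ≤ m) :
    ∀ {n : ℕ} (v : Fin n → V), (∀ i, v i ∈ K) →
      ∃ w : Fin m → V, (∀ j, w j ∈ K) ∧ ∑ j, w j = ∑ i, v i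
  | 0, _, _ => ⟨0, fun _ => h0, by simp⟩
  | n + 1, v, hv => by
    obtain ⟨w, hwK, hw⟩ := exists_sum_fin_eq_sum h0 hK hm (Fin.tail v) (fun i => hv _)
    obtain ⟨w', hw'K, hw'⟩ := exists_sum_fin_eq_sum_fin_succ hK hm (Fin.cons (v 0) w)
      (Fin.cases (hv 0) hwK)
    refine ⟨w', hw'K, ?_⟩
    rw [hw', Fin.sum_cons, hw, Fin.sum_univ_succ]
    rfl

end ConicCaratheodory

section DivergencePoints

variable (f g : ℝ → ℝ) (f0 fstar0 g0 gstar0 : ℝ)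

noncomputable def fDivTerm (p q : ℝ) : ℝ :=
  if 0 < q then q * (if 0 < p then f (p / q) else f0) else fstar0 * p

theorem fDiv_eq_sum_fDivTerm {n : ℕ} (P Q : Fin n → ℝ) :
    fDiv f f0 fstar0 P Q = ∑ i, fDivTerm f f0 fstar0 (P i) (Q i) := rfl

theorem fDivTerm_mul_mul {c : ℝ} (hc : 0 ≤ c) (p q : ℝ) :
    fDivTerm f f0 fstar0 (c * p) (c * q) = c * fDivTerm f f0 fstar0 p q := by
  rcases hc.eq_or_lt with rfl | hc
  · simp [fDivTerm]
  · simp only [fDivTerm, mul_pos_iff_of_pos_left hc, mul_div_mul_left _ _ hc.ne']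
    split_ifs <;> ring

noncomputable def divPoint (p q : ℝ) : Fin 4 → ℝ :=
  ![p, q, fDivTerm f f0 fstar0 p q, fDivTerm g g0 gstar0 p q]

def divPoints : Set (Fin 4 → ℝ) :=
  (fun x : ℝ × ℝ => divPoint f g f0 fstar0 g0 gstar0 x.1 x.2) '' {x | 0 ≤ x.1 ∧ 0 ≤ x.2}

theorem zero_mem_divPoints : (0 : Fin 4 → ℝ) ∈ divPoints f g f0 fstar0 g0 gstar0 :=
  ⟨(0, 0), ⟨le_rfl, le_rfl⟩, by ext k; fin_cases k <;> simp [divPoint, fDivTerm]⟩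

theorem smul_mem_divPoints (c : ℝ) (hc : 0 ≤ c) :
    ∀ x ∈ divPoints f g f0 fstar0 g0 gstar0, c • x ∈ divPoints f g f0 fstar0 g0 gstar0 := by
  rintro _ ⟨⟨p, q⟩, ⟨hp, hq⟩, rfl⟩
  refine ⟨(c * p, c * q), ⟨mul_nonneg hc hp, mul_nonneg hc hq⟩, ?_⟩
  ext k
  fin_cases k <;> simp [divPoint, fDivTerm_mul_mul _ _ _ hc]

end DivergencePoints

theorem achievable_is_four_achievable_general (f g : ℝ → ℝ) (f0 fstar0 g0 gstar0 : ℝ)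
    (n : ℕ) (P Q : Fin n → ℝ) (hP : IsProbVec P) (hQ : IsProbVec Q) :
    ∃ P' Q' : Fin 4 → ℝ, IsProbVec P' ∧ IsProbVec Q' ∧
      fDiv f f0 fstar0 P' Q' = fDiv f f0 fstar0 P Q ∧
      fDiv g g0 gstar0 P' Q' = fDiv g g0 gstar0 P Q := by
  obtain ⟨w, hwK, hw⟩ := exists_sum_fin_eq_sum (zero_mem_divPoints f g f0 fstar0 g0 gstar0)
    (smul_mem_divPoints f g f0 fstar0 g0 gstar0) (Module.finrank_fin_fun ℝ).le
    (fun i => divPoint f g f0 fstar0 g0 gstar0 (P i) (Q i))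
    (fun i => ⟨(P i, Q i), ⟨hP.1 i, hQ.1 i⟩, rfl⟩)
  choose x hx hxw using hwK
  have hcoord (k : Fin 4) : ∑ j, w j k = ∑ i, divPoint f g f0 fstar0 g0 gstar0 (P i) (Q i) k := by
    simpa only [Finset.sum_apply] using congrFun hw k
  simp only [← hxw] at hcoord
  refine ⟨fun j => (x j).1, fun j => (x j).2, ⟨fun j => (hx j).1, ?_⟩, ⟨fun j => (hx j).2, ?_⟩,
    ?_, ?_⟩
  · simpa [divPoint, hP.2] using hcoord 0
  · simpa [divPoint, hQ.2] using hcoord 1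
  · simpa [divPoint, fDiv_eq_sum_fDivTerm] using hcoord 2
  · simpa [divPoint, fDiv_eq_sum_fDivTerm] using hcoord 3

/-- Every `(f,g)`-achievable point is `4`-achievable. -/
theorem achievable_is_four_achievable (f g : ℝ → ℝ) (f0 fstar0 g0 gstar0 : ℝ)
    (hf : ConvexOn ℝ (Set.Ioi 0) f) (hf1 : f 1 = 0)
    (hg : ConvexOn ℝ (Set.Ioi 0) g) (hg1 : g 1 = 0)
    (hf0 : Tendsto f (𝓝[>] (0:ℝ)) (𝓝 f0))
    (hfs : Tendsto (fun t => f t / t) atTop (𝓝 fstar0))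
    (hg0 : Tendsto g (𝓝[>] (0:ℝ)) (𝓝 g0))
    (hgs : Tendsto (fun t => g t / t) atTop (𝓝 gstar0))
    (n : ℕ) (P Q : Fin n → ℝ) (hP : IsProbVec P) (hQ : IsProbVec Q) :
    ∃ P' Q' : Fin 4 → ℝ, IsProbVec P' ∧ IsProbVec Q' ∧
      fDiv f f0 fstar0 P' Q' = fDiv f f0 fstar0 P Q ∧
      fDiv g g0 gstar0 P' Q' = fDiv g g0 gstar0 P Q :=
  achievable_is_four_achievable_general f g f0 fstar0 g0 gstar0 n P Q hP hQ
end

section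
/- Let C be the set of Borel probability measures Q on [0,∞) satisfying ∫ x dQ(x) ≤ 1. If Q is an extreme point of the convex set C, then either Q is a Dirac measure δ_x for some x ∈ [0,1], or there exist two distinct points a, b ∈ [0,∞) such that Q({a,b}) = 1 and ∫ x dQ(x) = 1. -/
/-!
For measurable `g` with `|g| ≤ 1`, `Q` is the midpoint of the measures `(1 ± g) Q`, which lie in
`C` as soon as `∫ g dQ = 0` and `|∫ x g(x) dQ| ≤ 1 - ∫ x dQ`; so for an extreme point `Q` every
such `g` vanishes `Q`-a.e. For a suitably scaled step function `g = ∑ dᵢ 1_{Aᵢ}` over disjoint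
sets of positive mass this only asks `d` to satisfy two linear equations (just the first one when
the mean is `< 1`, since then any small `g` keeps the mean `≤ 1`), so there are no three such
sets, and not even two when the mean is `< 1`. Hence `Q` is zero-one, i.e. a Dirac mass, unless
some set `A` splits it; then the mean is `1`, and on each of `A` and `Aᶜ` the measure `Q` is a
multiple of a zero-one measure, i.e. of a point mass.
-/

open MeasureTheory Filter Set Function
open scoped ENNReal

section Perturbation

variable {α : Type*} [MeasurableSpace α] {μ : Measure α} {g : α → ℝ}

lemma isProbabilityMeasure_withDensity_one_add [IsProbabilityMeasure μ] (hg : Integrable g μ)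
    (hg1 : ∀ x, -1 ≤ g x) (hg0 : ∫ x, g x ∂μ = 0) :
    IsProbabilityMeasure (μ.withDensity fun x ↦ ENNReal.ofReal (1 + g x)) := by
  constructor
  have hint : Integrable (fun x ↦ 1 + g x) μ := (integrable_const 1).add hg
  rw [withDensity_apply _ MeasurableSet.univ, Measure.restrict_univ,
    ← ofReal_integral_eq_lintegral_ofReal hint
      (ae_of_all _ fun x ↦ by simp only [Pi.zero_apply]; linarith [hg1 x]),
    integral_add (integrable_const 1) hg, hg0]
  simp

lemma withDensity_one_add_add_withDensity_one_sub (hg : Measurable g)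
    (hg1 : ∀ x, |g x| ≤ 1) :
    (2⁻¹ : ℝ≥0∞) • (μ.withDensity (fun x ↦ ENNReal.ofReal (1 + g x)) +
      μ.withDensity fun x ↦ ENNReal.ofReal (1 + -g x)) = μ := by
  have hsum : ∀ x, ENNReal.ofReal (1 + g x) + ENNReal.ofReal (1 + -g x) = 2 := fun x ↦ by
    obtain ⟨h₁, h₂⟩ := abs_le.1 (hg1 x)
    rw [← ENNReal.ofReal_add (by linarith) (by linarith), show 1 + g x + (1 + -g x) = 2 by ring,
      ENNReal.ofReal_ofNat]
  rw [← withDensity_add_left (by fun_prop), Pi.add_def, funext hsum, withDensity_const, smul_smul,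
    ENNReal.inv_mul_cancel two_ne_zero ENNReal.ofNat_ne_top, one_smul]

lemma ae_eq_zero_of_withDensity_one_add_eq [SigmaFinite μ] (hg : Measurable g)
    (hg1 : ∀ x, |g x| ≤ 1)
    (h : μ.withDensity (fun x ↦ ENNReal.ofReal (1 + g x)) =
      μ.withDensity fun x ↦ ENNReal.ofReal (1 + -g x)) :
    g =ᵐ[μ] 0 := by
  rw [withDensity_eq_iff_of_sigmaFinite (by fun_prop) (by fun_prop)] at h
  filter_upwards [h] with x hx
  obtain ⟨h₁, h₂⟩ := abs_le.1 (hg1 x)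
  rw [ENNReal.ofReal_eq_ofReal_iff (by linarith) (by linarith)] at hx
  simp only [Pi.zero_apply]
  linarith

end Perturbation

lemma exists_restrict_eq_smul_dirac {α : Type*} [MeasurableSpace α] [StandardBorelSpace α]
    {μ : Measure α} [IsFiniteMeasure μ] {A : Set α} (hA : MeasurableSet A) (hA0 : μ A ≠ 0)
    (h : ∀ s, MeasurableSet s → μ (A ∩ s) = 0 ∨ μ (A \ s) = 0) :
    ∃ x ∈ A, μ.restrict A = μ A • Measure.dirac x := by
  set ν := (μ A)⁻¹ • μ.restrict A
  have hν : ∀ s, MeasurableSet s → ν s = (μ A)⁻¹ * μ (A ∩ s) := fun s hs ↦ by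
    simp [ν, Measure.restrict_apply hs, inter_comm]
  have hAA : (μ A)⁻¹ * μ A = 1 := ENNReal.inv_mul_cancel hA0 (measure_ne_top _ _)
  have : IsZeroOneMeasure ν := ⟨fun s hs ↦ (h s hs).imp
    (fun h0 ↦ by rw [hν s hs, h0, mul_zero])
    (fun h1 ↦ by rw [hν s hs, ← hAA, ← measure_inter_add_sdiff A hs, h1, add_zero])⟩
  have : NeZero ν := ⟨fun h0 ↦ by simpa [hν univ .univ, hAA] using congrArg (· univ) h0⟩
  obtain ⟨x, hx⟩ := IsZeroOneMeasure.exists_eq_dirac (μ := ν)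
  have hrestrict : μ.restrict A = μ A • Measure.dirac x := by
    rw [← hx, smul_smul, ENNReal.mul_inv_cancel hA0 (measure_ne_top _ _), one_smul]
  refine ⟨x, by_contra fun hxA ↦ ?_, hrestrict⟩
  have h0 : 0 = μ A := by
    simpa [Measure.restrict_apply hA.compl, hxA] using congrArg (· Aᶜ) hrestrict
  exact hA0 h0.symm

lemma exists_ne_zero_forall_dotProduct_eq_zero {K ι : Type*} [Field K] [Fintype ι] {k : ℕ}
    (u : Fin k → ι → K) (h : k < Fintype.card ι) : ∃ d ≠ 0, ∀ j, u j ⬝ᵥ d = 0 := by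
  obtain ⟨d, hd, hd0⟩ := Submodule.exists_mem_ne_zero_of_ne_bot <|
    LinearMap.ker_ne_bot_of_finrank_lt (f := (Matrix.of u).mulVecLin) (by simpa using h)
  rw [LinearMap.mem_ker, Matrix.mulVecLin_apply] at hd
  exact ⟨d, hd0, fun j ↦ by simpa [Matrix.mulVec] using congrFun hd j⟩

def meanLeOneMeasures : Set (Measure ℝ) :=
  {P | IsProbabilityMeasure P ∧ P (Iio 0) = 0 ∧ ∫⁻ x, ENNReal.ofReal x ∂P ≤ 1}

namespace meanLeOneMeasures

variable {Q : Measure ℝ} {g : ℝ → ℝ}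

lemma ae_nonneg (hQ : Q ∈ meanLeOneMeasures) : ∀ᵐ x ∂Q, 0 ≤ x := by
  filter_upwards [measure_eq_zero_iff_ae_notMem.1 hQ.2.1] with x hx
  simpa using hx

lemma integrable_id (hQ : Q ∈ meanLeOneMeasures) : Integrable (fun x ↦ x) Q :=
  (lintegral_ofReal_ne_top_iff_integrable aestronglyMeasurable_id (ae_nonneg hQ)).1
    (hQ.2.2.trans_lt ENNReal.one_lt_top).ne

lemma integral_id_nonneg (hQ : Q ∈ meanLeOneMeasures) : 0 ≤ ∫ x, x ∂Q :=
  integral_nonneg_of_ae (ae_nonneg hQ)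

lemma ofReal_integral_id (hQ : Q ∈ meanLeOneMeasures) :
    ENNReal.ofReal (∫ x, x ∂Q) = ∫⁻ x, ENNReal.ofReal x ∂Q :=
  ofReal_integral_eq_lintegral_ofReal (integrable_id hQ) (ae_nonneg hQ)

lemma integral_id_le_one (hQ : Q ∈ meanLeOneMeasures) : ∫ x, x ∂Q ≤ 1 := by
  rw [← ENNReal.ofReal_le_one, ofReal_integral_id hQ]
  exact hQ.2.2

lemma nonneg_of_measure_singleton_ne_zero (hQ : Q ∈ meanLeOneMeasures) {x : ℝ}
    (hx : Q {x} ≠ 0) : 0 ≤ x :=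
  not_lt.1 fun hx0 ↦ hx (measure_mono_null (singleton_subset_iff.2 hx0) hQ.2.1)

lemma abs_integral_mul_le (hQ : Q ∈ meanLeOneMeasures) {c : ℝ} (hg : ∀ x, |g x| ≤ c) :
    |∫ x, x * g x ∂Q| ≤ c * ∫ x, x ∂Q := by
  rw [← integral_const_mul]
  refine norm_integral_le_of_norm_le (f := fun x ↦ x * g x) ((integrable_id hQ).const_mul c) ?_
  filter_upwards [ae_nonneg hQ] with x hx
  rw [norm_mul, Real.norm_eq_abs, abs_of_nonneg hx, mul_comm c]
  exact mul_le_mul_of_nonneg_left (hg x) hx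

lemma withDensity_one_add_mem (hQ : Q ∈ meanLeOneMeasures) (hg : Measurable g)
    (hg1 : ∀ x, |g x| ≤ 1) (hg0 : ∫ x, g x ∂Q = 0) (hgm : ∫ x, x * (1 + g x) ∂Q ≤ 1) :
    Q.withDensity (fun x ↦ ENNReal.ofReal (1 + g x)) ∈ meanLeOneMeasures := by
  have := hQ.1
  have hg1' : ∀ x, 0 ≤ 1 + g x := fun x ↦ by linarith [(abs_le.1 (hg1 x)).1]
  have hint : Integrable (fun x ↦ x * (1 + g x)) Q :=
    (integrable_id hQ).mul_bdd (by fun_prop) (c := 2) (ae_of_all _ fun x ↦ by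
      rw [Real.norm_eq_abs, abs_of_nonneg (hg1' x)]; linarith [(abs_le.1 (hg1 x)).2])
  refine ⟨isProbabilityMeasure_withDensity_one_add ?_ (fun x ↦ (abs_le.1 (hg1 x)).1) hg0,
    withDensity_absolutelyContinuous _ _ hQ.2.1, ?_⟩
  · exact Integrable.of_bound hg.aestronglyMeasurable 1 (ae_of_all _ hg1)
  rw [lintegral_withDensity_eq_lintegral_mul _ (by fun_prop) (by fun_prop)]
  calc ∫⁻ x, ENNReal.ofReal (1 + g x) * ENNReal.ofReal x ∂Q
      = ∫⁻ x, ENNReal.ofReal (x * (1 + g x)) ∂Q := by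
        refine lintegral_congr fun x ↦ ?_
        rw [← ENNReal.ofReal_mul (hg1' x), mul_comm]
    _ = ENNReal.ofReal (∫ x, x * (1 + g x) ∂Q) := by
        refine (ofReal_integral_eq_lintegral_ofReal hint ?_).symm
        filter_upwards [ae_nonneg hQ] with x hx
        exact mul_nonneg hx (hg1' x)
    _ ≤ 1 := ENNReal.ofReal_le_one.2 hgm

lemma mem_extremePoints_of_forall (hQ : Q ∈ meanLeOneMeasures)
    (hext : ∀ (Q₀ Q₁ : Measure ℝ), IsProbabilityMeasure Q₀ → IsProbabilityMeasure Q₁ →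
      Q₀ (Set.Iio 0) = 0 → Q₁ (Set.Iio 0) = 0 →
      (∫⁻ x, ENNReal.ofReal x ∂Q₀) ≤ 1 → (∫⁻ x, ENNReal.ofReal x ∂Q₁) ≤ 1 →
      ∀ α : ℝ, 0 < α → α < 1 →
        Q = ENNReal.ofReal (1 - α) • Q₀ + ENNReal.ofReal α • Q₁ → Q₀ = Q₁) :
    Q ∈ meanLeOneMeasures.extremePoints ℝ≥0∞ := by
  refine ⟨hQ, fun Q₀ h₀ Q₁ h₁ ⟨a, b, ha, hb, hab, hQab⟩ ↦ ?_⟩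
  have hbtop : b ≠ ⊤ := ne_top_of_le_ne_top ENNReal.one_ne_top (hab ▸ le_add_self)
  have hb1 : b < 1 := hab ▸ add_comm b a ▸ ENNReal.lt_add_right hbtop ha.ne'
  have ha' : ENNReal.ofReal (1 - b.toReal) = a := by
    rw [ENNReal.ofReal_sub _ ENNReal.toReal_nonneg, ENNReal.ofReal_one,
      ENNReal.ofReal_toReal hbtop, ← hab, ENNReal.add_sub_cancel_right hbtop]
  have heq := hext Q₀ Q₁ h₀.1 h₁.1 h₀.2.1 h₁.2.1 h₀.2.2 h₁.2.2 b.toReal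
    (ENNReal.toReal_pos hb.ne' hbtop) (ENNReal.toReal_lt_of_lt_ofReal (by simpa using hb1))
    (by rw [ha', ENNReal.ofReal_toReal hbtop, hQab])
  rw [← hQab, ← heq, ← add_smul, hab, one_smul]

lemma ae_eq_zero_of_mem_extremePoints (hQ : Q ∈ meanLeOneMeasures.extremePoints ℝ≥0∞)
    (hg : Measurable g) (hg1 : ∀ x, |g x| ≤ 1) (hg0 : ∫ x, g x ∂Q = 0)
    (hgm : |∫ x, x * g x ∂Q| ≤ 1 - ∫ x, x ∂Q) :
    g =ᵐ[Q] 0 := by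
  have hQC := hQ.1
  have := hQC.1
  have hint : Integrable (fun x ↦ x * g x) Q :=
    (integrable_id hQC).mul_bdd (c := 1) (by fun_prop) (ae_of_all _ hg1)
  have hmean_plus : ∫ x, x * (1 + g x) ∂Q = ∫ x, x ∂Q + ∫ x, x * g x ∂Q := by
    simp_rw [mul_add, mul_one]
    exact integral_add (integrable_id hQC) hint
  have hmean_minus : ∫ x, x * (1 + -g x) ∂Q = ∫ x, x ∂Q - ∫ x, x * g x ∂Q := by
    simp_rw [mul_add, mul_one, mul_neg, ← sub_eq_add_neg]
    exact integral_sub (integrable_id hQC) hint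
  obtain ⟨hgm₁, hgm₂⟩ := abs_le.1 hgm
  have hplus := withDensity_one_add_mem hQC hg hg1 hg0 (by linarith)
  have hminus := withDensity_one_add_mem hQC hg.neg (g := -g) (by simpa using hg1)
    (by simp only [Pi.neg_apply, integral_neg, hg0, neg_zero])
    (by simp only [Pi.neg_apply]; linarith)
  have hseg : Q ∈ openSegment ℝ≥0∞ (Q.withDensity fun x ↦ ENNReal.ofReal (1 + g x))
      (Q.withDensity fun x ↦ ENNReal.ofReal (1 + -g x)) :=
    ⟨2⁻¹, 2⁻¹, by simp, by simp, ENNReal.inv_two_add_inv_two, by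
      rw [← smul_add]; exact withDensity_one_add_add_withDensity_one_sub hg hg1⟩
  obtain ⟨hplus_eq, hminus_eq⟩ := (mem_extremePoints.1 hQ).2 _ hplus _ hminus hseg
  exact ae_eq_zero_of_withDensity_one_add_eq hg hg1 (hplus_eq.trans hminus_eq.symm)

lemma ae_eq_zero_of_mem_extremePoints_of_bounded
    (hQ : Q ∈ meanLeOneMeasures.extremePoints ℝ≥0∞)
    (hg : Measurable g) {C : ℝ} (hC : ∀ x, |g x| ≤ C) (hg0 : ∫ x, g x ∂Q = 0)
    (hgm : ∫ x, x ∂Q < 1 ∨ ∫ x, x * g x ∂Q = 0) :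
    g =ᵐ[Q] 0 := by
  have hQC := hQ.1
  have hm₀ := integral_id_nonneg hQC
  have hm₁ := integral_id_le_one hQC
  obtain ⟨t, ht, htg1, htgm⟩ : ∃ t > 0, (∀ x, |t * g x| ≤ 1) ∧
      |∫ x, x * (t * g x) ∂Q| ≤ 1 - ∫ x, x ∂Q := by
    have hC0 : 0 < max C 1 := by positivity
    have hbound (s : ℝ) (hs : 0 ≤ s) (x : ℝ) : |s / max C 1 * g x| ≤ s := by
      rw [abs_mul, abs_of_nonneg (by positivity), div_mul_eq_mul_div, div_le_iff₀ hC0]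
      exact mul_le_mul_of_nonneg_left ((hC x).trans (le_max_left _ _)) hs
    rcases hgm with hm | hgm
    · refine ⟨(1 - ∫ x, x ∂Q) / max C 1, by bound, fun x ↦ (hbound _ (by linarith) x).trans
        (by linarith), (abs_integral_mul_le hQC (hbound _ (by linarith))).trans ?_⟩
      nlinarith
    · refine ⟨1 / max C 1, by positivity, hbound 1 zero_le_one, ?_⟩
      simp_rw [mul_left_comm _ (1 / max C 1)]
      rw [integral_const_mul, hgm, mul_zero, abs_zero]
      linarith
  have htg := ae_eq_zero_of_mem_extremePoints hQ (hg.const_mul t) htg1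
    (by rw [integral_const_mul, hg0, mul_zero]) htgm
  filter_upwards [htg] with x hx
  simpa [ht.ne'] using hx

lemma eq_zero_of_dotProduct_eq_zero_of_mem_extremePoints
    (hQ : Q ∈ meanLeOneMeasures.extremePoints ℝ≥0∞)
    {ι : Type*} [Fintype ι] {A : ι → Set ℝ} (hA : ∀ i, MeasurableSet (A i))
    (hdisj : Pairwise (Disjoint on A)) (hpos : ∀ i, Q (A i) ≠ 0) {d : ι → ℝ}
    (hd0 : (fun i ↦ Q.real (A i)) ⬝ᵥ d = 0)
    (hdm : ∫ x, x ∂Q < 1 ∨ (fun i ↦ ∫ x in A i, x ∂Q) ⬝ᵥ d = 0) :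
    d = 0 := by
  have hQC := hQ.1
  have := hQC.1
  set g : ℝ → ℝ := fun x ↦ ∑ i, (A i).indicator (fun _ ↦ d i) x
  have hg : Measurable g := Finset.measurable_sum _ fun i _ ↦ measurable_const.indicator (hA i)
  have hC : ∀ x, |g x| ≤ ∑ i, |d i| := fun x ↦
    (Finset.abs_sum_le_sum_abs _ _).trans
      (Finset.sum_le_sum fun i _ ↦ norm_indicator_le_norm_self (fun _ ↦ d i) x)
  have hg0 : ∫ x, g x ∂Q = (fun i ↦ Q.real (A i)) ⬝ᵥ d := by
    rw [integral_finsetSum _ fun i _ ↦ (integrable_const _).indicator (hA i)]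
    simp [integral_indicator_const _ (hA _), dotProduct]
  have hgm : ∫ x, x * g x ∂Q = (fun i ↦ ∫ x in A i, x ∂Q) ⬝ᵥ d := by
    simp_rw [g, Finset.mul_sum, ← indicator_mul_right _ (fun x : ℝ ↦ x)]
    rw [integral_finsetSum _ fun i _ ↦ ((integrable_id hQC).mul_const _).indicator (hA i)]
    simp [integral_indicator (hA _), integral_mul_const, dotProduct]
  have hg_ae := ae_eq_zero_of_mem_extremePoints_of_bounded hQ hg hC (hg0.trans hd0)
    (hgm ▸ hdm)
  funext i
  obtain ⟨x, hx, hgx⟩ := Measure.exists_mem_of_measure_ne_zero_of_ae (hpos i)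
    (ae_restrict_of_ae hg_ae)
  have hgx_eq : g x = d i := (Fintype.sum_eq_single i fun j hji ↦
    indicator_of_notMem (Set.disjoint_right.1 (hdisj hji) hx) _).trans (indicator_of_mem hx _)
  rwa [hgx_eq] at hgx

lemma card_le_one_of_pairwise_disjoint_of_integral_id_lt_one
    (hQ : Q ∈ meanLeOneMeasures.extremePoints ℝ≥0∞) (hm : ∫ x, x ∂Q < 1)
    {ι : Type*} [Fintype ι] {A : ι → Set ℝ} (hA : ∀ i, MeasurableSet (A i))
    (hdisj : Pairwise (Disjoint on A)) (hpos : ∀ i, Q (A i) ≠ 0) :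
    Fintype.card ι ≤ 1 := by
  by_contra! h
  obtain ⟨d, hd, hd0⟩ := exists_ne_zero_forall_dotProduct_eq_zero ![fun i ↦ Q.real (A i)] h
  exact hd <| eq_zero_of_dotProduct_eq_zero_of_mem_extremePoints hQ hA hdisj hpos (hd0 0)
    (Or.inl hm)

lemma card_le_two_of_pairwise_disjoint (hQ : Q ∈ meanLeOneMeasures.extremePoints ℝ≥0∞)
    {ι : Type*} [Fintype ι] {A : ι → Set ℝ} (hA : ∀ i, MeasurableSet (A i))
    (hdisj : Pairwise (Disjoint on A)) (hpos : ∀ i, Q (A i) ≠ 0) :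
    Fintype.card ι ≤ 2 := by
  by_contra! h
  obtain ⟨d, hd, hd0⟩ := exists_ne_zero_forall_dotProduct_eq_zero
    ![fun i ↦ Q.real (A i), fun i ↦ ∫ x in A i, x ∂Q] h
  exact hd <| eq_zero_of_dotProduct_eq_zero_of_mem_extremePoints hQ hA hdisj hpos (hd0 0)
    (Or.inr (hd0 1))

lemma integral_id_eq_one_of_mem_extremePoints (hQ : Q ∈ meanLeOneMeasures.extremePoints ℝ≥0∞)
    {A : Set ℝ} (hA : MeasurableSet A) (hA0 : Q A ≠ 0) (hAc : Q Aᶜ ≠ 0) : ∫ x, x ∂Q = 1 := by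
  by_contra hm
  have := card_le_one_of_pairwise_disjoint_of_integral_id_lt_one hQ
    ((integral_id_le_one hQ.1).lt_of_ne hm) (A := ![A, Aᶜ])
    (by simp [Fin.forall_fin_two, hA, hA.compl])
    (fun i j hij ↦ by fin_cases i <;> fin_cases j <;> simp_all [onFun, Set.disjoint_left])
    (by simp [Fin.forall_fin_two, hA0, hAc])
  simp at this

lemma measure_inter_eq_zero_or_measure_diff_eq_zero_of_mem_extremePoints
    (hQ : Q ∈ meanLeOneMeasures.extremePoints ℝ≥0∞) {A s : Set ℝ} (hA : MeasurableSet A)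
    (hAc : Q Aᶜ ≠ 0) (hs : MeasurableSet s) : Q (A ∩ s) = 0 ∨ Q (A \ s) = 0 := by
  by_contra! h
  have := card_le_two_of_pairwise_disjoint hQ (A := ![A ∩ s, A \ s, Aᶜ])
    (by simp [Fin.forall_fin_succ, hA.inter hs, hA.diff hs, hA.compl])
    (fun i j hij ↦ by fin_cases i <;> fin_cases j <;> simp_all [onFun, Set.disjoint_left])
    (by simp [Fin.forall_fin_succ, h.1, h.2, hAc])
  simp at this

lemma exists_eq_smul_dirac_add_smul_dirac (hQ : Q ∈ meanLeOneMeasures.extremePoints ℝ≥0∞)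
    {A : Set ℝ} (hA : MeasurableSet A) (hA0 : Q A ≠ 0) (hAc : Q Aᶜ ≠ 0) :
    ∃ a ∈ A, ∃ b ∈ Aᶜ, Q = Q A • Measure.dirac a + Q Aᶜ • Measure.dirac b := by
  have := hQ.1.1
  obtain ⟨a, haA, ha⟩ := exists_restrict_eq_smul_dirac hA hA0 fun s ↦
    measure_inter_eq_zero_or_measure_diff_eq_zero_of_mem_extremePoints hQ hA hAc
  obtain ⟨b, hbA, hb⟩ := exists_restrict_eq_smul_dirac hA.compl hAc fun s ↦
    measure_inter_eq_zero_or_measure_diff_eq_zero_of_mem_extremePoints hQ hA.compl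
      (by rwa [compl_compl])
  exact ⟨a, haA, b, hbA, by rw [← ha, ← hb, Measure.restrict_add_restrict_compl hA]⟩

end meanLeOneMeasures

/-- An extreme point of the convex set `C` of Borel probability measures on `[0,∞)` with mean
at most `1` is either a Dirac measure `δ_x` with `x ∈ [0,1]`, or is supported on two distinct
points and has mean exactly `1`. -/
theorem extreme_point_of_mean_le_one (Q : Measure ℝ) [IsProbabilityMeasure Q]
    (hQpos : Q (Set.Iio 0) = 0)
    (hQmean : ∫⁻ x, ENNReal.ofReal x ∂Q ≤ 1)
    (hext : ∀ (Q₀ Q₁ : Measure ℝ), IsProbabilityMeasure Q₀ → IsProbabilityMeasure Q₁ →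
      Q₀ (Set.Iio 0) = 0 → Q₁ (Set.Iio 0) = 0 →
      (∫⁻ x, ENNReal.ofReal x ∂Q₀) ≤ 1 → (∫⁻ x, ENNReal.ofReal x ∂Q₁) ≤ 1 →
      ∀ α : ℝ, 0 < α → α < 1 →
        Q = ENNReal.ofReal (1 - α) • Q₀ + ENNReal.ofReal α • Q₁ → Q₀ = Q₁) :
    (∃ x : ℝ, 0 ≤ x ∧ x ≤ 1 ∧ Q = Measure.dirac x) ∨
    (∃ a b : ℝ, 0 ≤ a ∧ 0 ≤ b ∧ a ≠ b ∧ Q ({a, b} : Set ℝ) = 1 ∧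
      ∫⁻ x, ENNReal.ofReal x ∂Q = 1) := by
  open meanLeOneMeasures in
  have hQC : Q ∈ meanLeOneMeasures := ⟨inferInstance, hQpos, hQmean⟩
  have hQ := mem_extremePoints_of_forall hQC hext
  by_cases hsplit : ∃ A, MeasurableSet A ∧ Q A ≠ 0 ∧ Q Aᶜ ≠ 0
  · obtain ⟨A, hA, hA0, hAc⟩ := hsplit
    obtain ⟨a, haA, b, hbA, hQab⟩ := exists_eq_smul_dirac_add_smul_dirac hQ hA hA0 hAc
    refine Or.inr ⟨a, b, nonneg_of_measure_singleton_ne_zero hQC ?_,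
      nonneg_of_measure_singleton_ne_zero hQC ?_, fun hab ↦ hbA (hab ▸ haA), ?_, ?_⟩
    · rw [hQab]; simp [hA0]
    · rw [hQab]; simp [hAc]
    · rw [hQab]; simp [measure_add_measure_compl hA]
    · rw [← ofReal_integral_id hQC, integral_id_eq_one_of_mem_extremePoints hQ hA hA0 hAc,
        ENNReal.ofReal_one]
  · push Not at hsplit
    obtain ⟨x, -, hx⟩ := exists_restrict_eq_smul_dirac (μ := Q) MeasurableSet.univ (by simp)
      fun s hs ↦ by simpa [or_iff_not_imp_left, compl_eq_univ_sdiff] using hsplit s hs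
    rw [Measure.restrict_univ, measure_univ, one_smul] at hx
    refine Or.inl ⟨x, nonneg_of_measure_singleton_ne_zero hQC (by simp [hx]), ?_, hx⟩
    rwa [hx, lintegral_dirac, ENNReal.ofReal_le_one] at hQmean
end

section
/- Let f, g : (0,∞) → ℝ be convex with f(1) = g(1) = 0. Suppose f(t) → ∞ as t → 0+, and let β₀ := liminf_{t→0+} g(t)/f(t), the limit inferior taken in the extended reals. Then for every real β > β₀ the supremum of β·D_f(P,Q) − D_g(P,Q) over two-point distributions is infinite: for every M ∈ ℝ there exist p, q ∈ (0,1) such that, with P = (p, 1−p) and Q = (q, 1−q), one has β·D_f(P,Q) − D_g(P,Q) > M. -/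
open Finset Filter Topology

/-- The `f`-divergence of the two-point distributions `P = (p, 1-p)` and `Q = (q, 1-q)`. -/
noncomputable def fDiv2 (f : ℝ → ℝ) (p q : ℝ) : ℝ :=
  q * f (p / q) + (1 - q) * f ((1 - p) / (1 - q))

/-- If `f(t) → ∞` as `t → 0+` and `β` exceeds `β₀ = liminf_{t→0+} g(t)/f(t)`, then
`β·D_f − D_g` is unbounded above over two-point distributions. -/
theorem sup_beta_f_sub_g_eq_top_of_liminf_zero (f g : ℝ → ℝ)
    (hf : ConvexOn ℝ (Set.Ioi 0) f) (hg : ConvexOn ℝ (Set.Ioi 0) g)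
    (hf1 : f 1 = 0) (hg1 : g 1 = 0)
    (hf0 : Tendsto f (𝓝[>] (0:ℝ)) atTop)
    (β : ℝ)
    (hβ : liminf (fun t => ((g t / f t : ℝ) : EReal)) (𝓝[>] (0:ℝ)) < (β : EReal)) :
    ∀ M : ℝ, ∃ p q : ℝ, p ∈ Set.Ioo (0:ℝ) 1 ∧ q ∈ Set.Ioo (0:ℝ) 1 ∧
      β * fDiv2 f p q - fDiv2 g p q > M := by
  intro M
  -- pick β' between liminf and β
  obtain ⟨β', hβ'1, hβ'2⟩ := EReal.exists_between_coe_real hβ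
  have hδ : (0:ℝ) < β - β' := by
    have := EReal.coe_lt_coe_iff.mp hβ'2; linarith
  -- continuity of h := β f - g on [3/2, 2]
  have hfc : ContinuousOn f (Set.Ioi 0) := hf.continuousOn isOpen_Ioi
  have hgc : ContinuousOn g (Set.Ioi 0) := hg.continuousOn isOpen_Ioi
  have hsub : Set.Icc (3/2 : ℝ) 2 ⊆ Set.Ioi 0 := by
    intro x hx; simp only [Set.mem_Ioi]; linarith [hx.1]
  have hhc : ContinuousOn (fun x => β * f x - g x) (Set.Icc (3/2:ℝ) 2) :=
    ((continuousOn_const.mul (hfc.mono hsub)).sub (hgc.mono hsub))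
  obtain ⟨x₀, hx₀, hmin⟩ := isCompact_Icc.exists_isMinOn (by
    exact ⟨3/2, by norm_num⟩) hhc
  set c : ℝ := β * f x₀ - g x₀ with hc
  -- threshold
  set L : ℝ := max 1 ((2 * M - c) / (β - β') + 1) with hL
  -- frequently g t / f t < β'
  have hfreq : ∃ᶠ t in 𝓝[>] (0:ℝ), g t / f t < β' := by
    have := frequently_lt_of_liminf_lt (by isBoundedDefault) hβ'1
    exact this.mono fun t ht => EReal.coe_lt_coe_iff.mp ht
  have hev1 : ∀ᶠ t in 𝓝[>] (0:ℝ), L < f t := hf0.eventually_gt_atTop L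
  have hev2 : ∀ᶠ t in 𝓝[>] (0:ℝ), t < 1/2 :=
    eventually_nhdsWithin_of_eventually_nhds (gt_mem_nhds (by norm_num))
  have hev3 : ∀ᶠ t in 𝓝[>] (0:ℝ), 0 < t := eventually_mem_nhdsWithin
  obtain ⟨t, ht1, ht2, ht3, ht4⟩ := (hfreq.and_eventually (hev1.and (hev2.and hev3))).exists
  -- use p = t/2, q = 1/2
  refine ⟨t/2, 1/2, ⟨by linarith, by linarith⟩, ⟨by norm_num, by norm_num⟩, ?_⟩
  have hft : (0:ℝ) < f t := lt_of_lt_of_le (by positivity : (0:ℝ) < 1)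
      (le_trans (le_max_left _ _) ht2.le)
  have hgt : g t < β' * f t := by
    have := (div_lt_iff₀ hft).mp ht1; linarith
  have hmem : (2 - t) ∈ Set.Icc (3/2:ℝ) 2 := ⟨by linarith, by linarith⟩
  have hcle : c ≤ β * f (2 - t) - g (2 - t) := hmin hmem
  have hfL : (2 * M - c) / (β - β') + 1 ≤ L := le_max_right _ _
  have hkey : 2 * M - c < (β - β') * f t := by
    have h1 : (2 * M - c) / (β - β') < f t := by linarith [ht2]
    calc 2 * M - c = (2 * M - c) / (β - β') * (β - β') := by field_simp
    _ < f t * (β - β') := by exact mul_lt_mul_of_pos_right h1 hδ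
    _ = (β - β') * f t := by ring
  have e0a : t/2/(1/2:ℝ) = t := by ring
  have e0b : (1 - t/2)/(1/2:ℝ) = 2 - t := by ring
  have e1 : fDiv2 f (t/2) (1/2) = (1/2) * f t + (1/2) * f (2 - t) := by
    unfold fDiv2; norm_num; rw [e0a, e0b]
  have e2 : fDiv2 g (t/2) (1/2) = (1/2) * g t + (1/2) * g (2 - t) := by
    unfold fDiv2; norm_num; rw [e0a, e0b]
  rw [e1, e2]
  nlinarith [hgt, hcle, hkey]
end

section
/- Let f, g : (0,∞) → ℝ be convex with f(1) = g(1) = 0. Suppose f(t)/t → ∞ as t → ∞, and let β₀ := liminf_{t→∞} g(t)/f(t), the limit inferior taken in the extended reals. Then for every real β > β₀ the supremum of β·D_f(P,Q) − D_g(P,Q) over two-point distributions is infinite: for every M ∈ ℝ there exist p, q ∈ (0,1) such that, with P = (p, 1−p) and Q = (q, 1−q), one has β·D_f(P,Q) − D_g(P,Q) > M. -/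
open Finset Filter Topology

/-- If `f(t)/t → ∞` as `t → ∞` and `β` exceeds `β₀ = liminf_{t→∞} g(t)/f(t)`, then
`β·D_f − D_g` is unbounded above over two-point distributions. -/
theorem sup_beta_f_sub_g_eq_top_of_liminf_atTop (f g : ℝ → ℝ)
    (hf : ConvexOn ℝ (Set.Ioi 0) f) (hg : ConvexOn ℝ (Set.Ioi 0) g)
    (hf1 : f 1 = 0) (hg1 : g 1 = 0)
    (hfs : Tendsto (fun t => f t / t) atTop atTop)
    (β : ℝ)
    (hβ : liminf (fun t => ((g t / f t : ℝ) : EReal)) atTop < (β : EReal)) :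
    ∀ M : ℝ, ∃ p q : ℝ, p ∈ Set.Ioo (0:ℝ) 1 ∧ q ∈ Set.Ioo (0:ℝ) 1 ∧
      β * fDiv2 f p q - fDiv2 g p q > M := by
  intro M
  obtain ⟨β', hβ'1, hβ'2⟩ := EReal.exists_between_coe_real hβ
  have hε : (0:ℝ) < β - β' := by
    have := EReal.coe_lt_coe_iff.mp hβ'2
    linarith
  -- frequently g t / f t < β'
  have hfreq : ∃ᶠ t in atTop, g t / f t < β' := by
    have h := frequently_lt_of_liminf_lt (u := fun t => ((g t / f t : ℝ) : EReal)) (b := (β' : EReal)) (by isBoundedDefault) hβ'1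
    exact h.mono fun t ht => EReal.coe_lt_coe_iff.mp ht
  -- the second-term function and its limit
  set φ : ℝ → ℝ := fun t => (1 - 1/(2*t)) * (β * f (t/(2*t-1)) - g (t/(2*t-1))) with hφdef
  set L : ℝ := β * f (1/2) - g (1/2) with hL
  have hcf : ContinuousOn f (Set.Ioi 0) := hf.continuousOn isOpen_Ioi
  have hcg : ContinuousOn g (Set.Ioi 0) := hg.continuousOn isOpen_Ioi
  have hhalf : (1/2 : ℝ) ∈ Set.Ioi (0:ℝ) := by norm_num
  have hcf' : ContinuousAt f (1/2) := hcf.continuousAt (isOpen_Ioi.mem_nhds hhalf)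
  have hcg' : ContinuousAt g (1/2) := hcg.continuousAt (isOpen_Ioi.mem_nhds hhalf)
  have hs : Tendsto (fun t : ℝ => t/(2*t-1)) atTop (𝓝 (1/2)) := by
    have h1 : Tendsto (fun t : ℝ => (2 - t⁻¹)⁻¹) atTop (𝓝 (1/2)) := by
      have h2 : Tendsto (fun t : ℝ => 2 - t⁻¹) atTop (𝓝 2) := by
        simpa using (tendsto_const_nhds (x := (2:ℝ)) (f := (atTop : Filter ℝ))).sub
          tendsto_inv_atTop_zero
      have := h2.inv₀ (by norm_num)
      simpa using this
    refine h1.congr' ?_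
    filter_upwards [eventually_ge_atTop (1:ℝ)] with t ht
    have ht0 : t ≠ 0 := by linarith
    have ht1 : 2*t - 1 ≠ 0 := by nlinarith
    field_simp
  have hq1 : Tendsto (fun t : ℝ => 1 - 1/(2*t)) atTop (𝓝 1) := by
    have h2 : Tendsto (fun t : ℝ => 1/(2*t)) atTop (𝓝 0) := by
      have h := (tendsto_inv_atTop_zero (𝕜 := ℝ)).const_mul (2⁻¹ : ℝ)
      simpa [one_div, mul_inv, mul_comm] using h
    simpa using (tendsto_const_nhds (x := (1:ℝ)) (f := (atTop:Filter ℝ))).sub h2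
  have hφlim : Tendsto φ atTop (𝓝 L) := by
    have hinner : Tendsto (fun t : ℝ => β * f (t/(2*t-1)) - g (t/(2*t-1))) atTop (𝓝 L) := by
      have hfc := hcf'.tendsto.comp hs
      have hgc := hcg'.tendsto.comp hs
      simpa [hL] using ((tendsto_const_nhds (x := β)).mul hfc).sub hgc
    have := hq1.mul hinner
    rw [one_mul] at this
    exact this
  have hφev : ∀ᶠ t in atTop, φ t > L - 1 :=
    hφlim.eventually (eventually_gt_nhds (by linarith))
  -- eventual largeness of f t / t
  set A : ℝ := max 1 (2*(M - L + 1)/(β - β')) with hA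
  have hfev : ∀ᶠ t in atTop, f t / t ≥ A := hfs.eventually_ge_atTop A
  -- pick t
  obtain ⟨t, ht1, ht2, ht3, ht4⟩ :=
    (hfreq.and_eventually (hfev.and (hφev.and (eventually_ge_atTop (1:ℝ))))).exists
  have htpos : (0:ℝ) < t := by linarith
  have hft : f t / t ≥ 1 := le_trans (le_max_left _ _) ht2
  have hftpos : 0 < f t := by nlinarith [(le_div_iff₀ htpos).mp hft]
  refine ⟨1/2, 1/(2*t), by norm_num, ⟨by positivity, ?_⟩, ?_⟩
  · rw [div_lt_one (by linarith)]; linarith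
  -- main computation
  have ht0 : t ≠ 0 := ne_of_gt htpos
  have ht2t : (2*t - 1 : ℝ) ≠ 0 := by nlinarith
  have e1 : (1/2 : ℝ) / (1/(2*t)) = t := by field_simp
  have hdpos : (0:ℝ) < 1 - 1/(2*t) := by
    have h : 1/(2*t) < 1 := by rw [div_lt_one (by linarith)]; linarith
    linarith
  have e2 : (1 - (1/2:ℝ)) / (1 - 1/(2*t)) = t/(2*t-1) := by
    rw [div_eq_div_iff hdpos.ne' ht2t]
    field_simp
    ring
  have key : β * fDiv2 f (1/2) (1/(2*t)) - fDiv2 g (1/2) (1/(2*t))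
      = (1/(2*t)) * (β * f t - g t) + φ t := by
    simp only [fDiv2, e1, e2, hφdef]
    ring
  rw [key]
  -- first term bound
  have hratio : g t = f t * (g t / f t) := by field_simp
  have hlow : β * f t - g t > f t * (β - β') := by
    rw [hratio]; nlinarith
  have hA2 : f t / t ≥ 2*(M - L + 1)/(β - β') := le_trans (le_max_right _ _) ht2
  have hfirst : (1/(2*t)) * (β * f t - g t) > M - L + 1 := by
    have h1 : (1/(2*t)) * (β * f t - g t) > (1/(2*t)) * (f t * (β - β')) := by
      apply mul_lt_mul_of_pos_left hlow (by positivity)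
    have h2 : (1/(2*t)) * (f t * (β - β')) ≥ M - L + 1 := by
      have h3 : f t ≥ (2*(M - L + 1)/(β - β')) * t := by
        calc f t = (f t / t) * t := by field_simp
        _ ≥ (2*(M - L + 1)/(β - β')) * t := by
            apply mul_le_mul_of_nonneg_right hA2 (le_of_lt htpos)
      have h4 : (1/(2*t)) * (f t * (β - β')) ≥
          (1/(2*t)) * (((2*(M - L + 1)/(β - β')) * t) * (β - β')) := by
        apply mul_le_mul_of_nonneg_left ?_ (by positivity)
        apply mul_le_mul_of_nonneg_right h3 (le_of_lt hε)
      calc (1/(2*t)) * (f t * (β - β')) ≥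
          (1/(2*t)) * (((2*(M - L + 1)/(β - β')) * t) * (β - β')) := h4
        _ = M - L + 1 := by field_simp
    linarith
  clear_value φ L
  linarith
end

section
/- Let f, g : (0,∞) → ℝ be convex with f(1) = g(1) = 0. Suppose g(t) → ∞ as t → 0+, and let γ₀ := limsup_{t→0+} g(t)/f(t), the limit superior taken in the extended reals. Then for every real γ < γ₀ the supremum of D_g(P,Q) − γ·D_f(P,Q) over two-point distributions is infinite: for every M ∈ ℝ there exist p, q ∈ (0,1) such that, with P = (p, 1−p) and Q = (q, 1−q), one has D_g(P,Q) − γ·D_f(P,Q) > M. -/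
open Filter Topology Set

theorem ConvexOn.isBoundedUnder_ge_nhdsGT {f : ℝ → ℝ} {a : ℝ} (hf : ConvexOn ℝ (Ioi a) f) :
    IsBoundedUnder (· ≥ ·) (𝓝[>] a) f := by
  refine isBoundedUnder_of_eventually_ge (a := f (a + 1) - |f (a + 2) - f (a + 1)|) ?_
  filter_upwards [Ioo_mem_nhdsGT (show a < a + 1 by linarith)] with t ⟨hat, hta⟩
  have hslope := hf.slope_mono_adjacent hat (show a + 2 ∈ Ioi a from by simp) hta
    (by linarith)
  rw [div_le_div_iff₀ (by linarith) (by norm_num)] at hslope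
  have hrem : (a + 1 - t) * (f (a + 2) - f (a + 1)) ≤ |f (a + 2) - f (a + 1)| :=
    calc (a + 1 - t) * (f (a + 2) - f (a + 1)) ≤ (a + 1 - t) * |f (a + 2) - f (a + 1)| :=
          mul_le_mul_of_nonneg_left (le_abs_self _) (by linarith)
      _ ≤ |f (a + 2) - f (a + 1)| :=
          mul_le_of_le_one_left (abs_nonneg _) (by linarith)
  linarith

lemma one_sub_div_mul_le_sub_mul_of_lt_div {a b γ γ' : ℝ} (hγ : 0 ≤ γ) (hγγ' : γ < γ')
    (ha : 0 < a) (hab : γ' < a / b) : (1 - γ / γ') * a ≤ a - γ * b := by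
  have hγ' : 0 < γ' := hγ.trans_lt hγγ'
  have hb : 0 < b := by
    by_contra! hb
    linarith [div_nonpos_of_nonneg_of_nonpos ha.le hb]
  have hlt : γ' * b < a := (lt_div_iff₀ hb).mp hab
  have : γ * b ≤ γ / γ' * a :=
    calc γ * b = γ / γ' * (γ' * b) := by field_simp
      _ ≤ γ / γ' * a := mul_le_mul_of_nonneg_left hlt.le (by positivity)
  linarith

lemma frequently_lt_sub_mul_of_frequently_lt_div {α : Type*} {l : Filter α} {f g : α → ℝ}
    (hg : Tendsto g l atTop) {γ γ' : ℝ} (hγ : 0 ≤ γ) (hγγ' : γ < γ')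
    (hfreq : ∃ᶠ t in l, γ' < g t / f t) (A : ℝ) : ∃ᶠ t in l, A < g t - γ * f t := by
  have hc : 0 < 1 - γ / γ' := by
    rw [sub_pos, div_lt_one (hγ.trans_lt hγγ')]
    exact hγγ'
  refine (hfreq.and_eventually ((hg.eventually_gt_atTop 0).and
    (hg.eventually_gt_atTop (A / (1 - γ / γ'))))).mono ?_
  rintro t ⟨hdiv, hpos, hlarge⟩
  rw [div_lt_iff₀ hc] at hlarge
  linarith [one_sub_div_mul_le_sub_mul_of_lt_div hγ hγγ' hpos hdiv]

lemma frequently_lt_sub_mul_of_lt_limsup {f g : ℝ → ℝ} (hf : ConvexOn ℝ (Ioi 0) f)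
    (hg0 : Tendsto g (𝓝[>] 0) atTop) {γ : ℝ}
    (hγ : (γ : EReal) < limsup (fun t => ((g t / f t : ℝ) : EReal)) (𝓝[>] 0)) (A : ℝ) :
    ∃ᶠ t in 𝓝[>] 0, A < g t - γ * f t := by
  rcases le_or_gt γ 0 with hγ0 | hγ0
  · obtain ⟨B, hB⟩ := hf.isBoundedUnder_ge_nhdsGT.eventually_ge
    have htendsto : Tendsto (fun t => g t + -γ * f t) (𝓝[>] 0) atTop :=
      tendsto_atTop_add_right_of_le' _ (-γ * B) hg0
        (hB.mono fun t ht => mul_le_mul_of_nonneg_left ht (by linarith))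
    simpa only [neg_mul, ← sub_eq_add_neg] using
      (htendsto.eventually_gt_atTop A).frequently
  · obtain ⟨γ', hγγ', hγ'⟩ := EReal.exists_between_coe_real hγ
    have hfreq : ∃ᶠ t in 𝓝[>] 0, γ' < g t / f t :=
      (frequently_lt_of_lt_limsup (by isBoundedDefault) hγ').mono fun t ht => by
        exact_mod_cast ht
    exact frequently_lt_sub_mul_of_frequently_lt_div hg0 hγ0.le (by exact_mod_cast hγγ') hfreq A

lemma fDiv2_sub_mul (f g : ℝ → ℝ) (γ p q : ℝ) :
    fDiv2 (fun x => g x - γ * f x) p q = fDiv2 g p q - γ * fDiv2 f p q := by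
  simp only [fDiv2]
  ring

lemma exists_lt_fDiv2 {h : ℝ → ℝ} (hbdd : IsBoundedUnder (· ≥ ·) (𝓝[>] 1) h)
    (hlarge : ∀ A, ∃ᶠ t in 𝓝[>] 0, A < h t) (M : ℝ) :
    ∃ p q : ℝ, p ∈ Ioo (0:ℝ) 1 ∧ q ∈ Ioo (0:ℝ) 1 ∧ M < fDiv2 h p q := by
  obtain ⟨C, hC⟩ := hbdd.eventually_ge
  obtain ⟨b, hb1, hbC⟩ := mem_nhdsGT_iff_exists_Ioo_subset.mp hC
  obtain ⟨δ, hδ, rfl⟩ : ∃ δ, 0 < δ ∧ 1 + δ = b := ⟨b - 1, sub_pos.mpr hb1, by ring⟩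
  set q := δ / (1 + δ) with hq_def
  have hq : q ∈ Ioo (0:ℝ) 1 := ⟨by positivity, (div_lt_one (by linarith)).mpr (by linarith)⟩
  obtain ⟨t, hlarge_t, ht0, ht1⟩ := ((hlarge ((M - (1 - q) * C) / q)).and_eventually
    (Ioo_mem_nhdsGT (show (0:ℝ) < 1 by norm_num))).exists
  have hsplit : fDiv2 h (t * q) q = q * h t + (1 - q) * h (1 + δ * (1 - t)) := by
    have hq1 : 1 - q = 1 / (1 + δ) := by rw [hq_def]; field_simp; ring
    have hu : (1 - t * q) / (1 - q) = 1 + δ * (1 - t) := by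
      rw [hq1, hq_def]; field_simp; ring
    rw [fDiv2, mul_div_cancel_right₀ t hq.1.ne', hu]
  have hCu : C ≤ h (1 + δ * (1 - t)) :=
    hbC ⟨lt_add_of_pos_right 1 (mul_pos hδ (sub_pos.mpr ht1)),
      add_lt_add_right (mul_lt_of_lt_one_right hδ (sub_lt_self 1 ht0)) 1⟩
  refine ⟨t * q, q, ⟨mul_pos ht0 hq.1, mul_lt_one_of_nonneg_of_lt_one_left ht0.le ht1 hq.2.le⟩,
    hq, ?_⟩
  rw [div_lt_iff₀ hq.1] at hlarge_t
  rw [hsplit]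
  linarith [mul_le_mul_of_nonneg_left hCu (sub_pos.mpr hq.2).le]

theorem sup_g_sub_gamma_f_eq_top_of_limsup_zero_general (f g : ℝ → ℝ)
    (hf : ConvexOn ℝ (Set.Ioi 0) f) (hg : ConvexOn ℝ (Set.Ioi 0) g)
    (hg0 : Tendsto g (𝓝[>] (0:ℝ)) atTop)
    (γ : ℝ)
    (hγ : (γ : EReal) < limsup (fun t => ((g t / f t : ℝ) : EReal)) (𝓝[>] (0:ℝ))) :
    ∀ M : ℝ, ∃ p q : ℝ, p ∈ Set.Ioo (0:ℝ) 1 ∧ q ∈ Set.Ioo (0:ℝ) 1 ∧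
      fDiv2 g p q - γ * fDiv2 f p q > M := by
  intro M
  have hone : Ioi (0:ℝ) ∈ 𝓝 1 := Ioi_mem_nhds one_pos
  have hcont : ContinuousAt (fun x => g x - γ * f x) 1 :=
    ((hg.continuousOn isOpen_Ioi).continuousAt hone).sub
      (continuousAt_const.mul ((hf.continuousOn isOpen_Ioi).continuousAt hone))
  have hbdd := hcont.tendsto.isBoundedUnder_ge.mono (nhdsWithin_le_nhds (s := Ioi 1))
  obtain ⟨p, q, hp, hq, hM⟩ :=
    exists_lt_fDiv2 hbdd (frequently_lt_sub_mul_of_lt_limsup hf hg0 hγ) M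
  exact ⟨p, q, hp, hq, by rwa [fDiv2_sub_mul] at hM⟩

/-- If `g(t) → ∞` as `t → 0+` and `γ` is below `γ₀ = limsup_{t→0+} g(t)/f(t)`, then
`D_g − γ·D_f` is unbounded above over two-point distributions. -/
theorem sup_g_sub_gamma_f_eq_top_of_limsup_zero (f g : ℝ → ℝ)
    (hf : ConvexOn ℝ (Set.Ioi 0) f) (hg : ConvexOn ℝ (Set.Ioi 0) g)
    (hf1 : f 1 = 0) (hg1 : g 1 = 0)
    (hg0 : Tendsto g (𝓝[>] (0:ℝ)) atTop)
    (γ : ℝ)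
    (hγ : (γ : EReal) < limsup (fun t => ((g t / f t : ℝ) : EReal)) (𝓝[>] (0:ℝ))) :
    ∀ M : ℝ, ∃ p q : ℝ, p ∈ Set.Ioo (0:ℝ) 1 ∧ q ∈ Set.Ioo (0:ℝ) 1 ∧
      fDiv2 g p q - γ * fDiv2 f p q > M :=
  sup_g_sub_gamma_f_eq_top_of_limsup_zero_general f g hf hg hg0 γ hγ
end

section
/- Let f, g : (0,∞) → ℝ be convex, twice continuously differentiable functions with f(1) = g(1) = 0, f'(1) = g'(1) = 0, f''(1) > 0 and g''(1) > 0. Suppose liminf_{t→0+} g(t)/f(t) > 0 and liminf_{t→∞} g(t)/f(t) > 0 (limits inferior taken in the extended reals). Then there exists β > 0 such that D_g(P,Q) ≥ β·D_f(P,Q) holds for every n and all probability vectors P, Q of length n with all entries strictly positive. -/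
/-!
Both divergences are sums of `Q i` times a function of `P i / Q i`, so it suffices to find `β > 0`
with `β * f t ≤ g t` for every `t > 0`. Such a bound holds near every point of `(0, ∞)`: near
`t = 1` both functions vanish to second order, `f` is `O((t - 1)²)` and `g` is at least a positive
multiple of `(t - 1)²` since `g''(1) > 0`; away from `1` the convex function `g` is strictly
positive and `f` is bounded. The liminf hypotheses give the bound near `0` and `∞`, and
compactness of the remaining interval patches finitely many local constants together.
-/

open Filter Topology Set

theorem mul_le_of_le_of_mul_le {β β' a b : ℝ} (hb : 0 ≤ b) (hβ' : 0 ≤ β') (hle : β' ≤ β)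
    (h : β * a ≤ b) : β' * a ≤ b := by
  rcases le_total 0 a with ha | ha
  · exact (mul_le_mul_of_nonneg_right hle ha).trans h
  · exact (mul_nonpos_of_nonneg_of_nonpos hβ' ha).trans hb

theorem exists_pos_eventually_mul_le_of_pos {X : Type*} [TopologicalSpace X] {f g : X → ℝ}
    {x : X} (hf : ContinuousAt f x) (hg : ContinuousAt g x) (hgx : 0 < g x) :
    ∃ β > 0, ∀ᶠ t in 𝓝 x, β * f t ≤ g t := by
  set M := |f x| + 1
  have hM : 0 < M := by positivity
  refine ⟨g x / (2 * M), by positivity, ?_⟩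
  filter_upwards [hf.eventually (gt_mem_nhds (lt_of_le_of_lt (le_abs_self (f x)) (lt_add_one _))),
    hg.eventually (lt_mem_nhds (half_lt_self hgx))] with t hft hgt
  calc g x / (2 * M) * f t ≤ g x / (2 * M) * M := by gcongr
    _ = g x / 2 := by field_simp
    _ ≤ g t := hgt.le

theorem exists_pos_eventually_mul_le_of_liminf_pos {α : Type*} {l : Filter α} {f g : α → ℝ}
    (h : 0 < liminf (fun t => ((g t / f t : ℝ) : EReal)) l) (hg : ∀ᶠ t in l, 0 ≤ g t) :
    ∃ β > 0, ∀ᶠ t in l, β * f t ≤ g t := by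
  obtain ⟨β, hβ, hβl⟩ := EReal.exists_between_coe_real h
  refine ⟨β, EReal.coe_pos.1 hβ, ?_⟩
  filter_upwards [eventually_lt_of_lt_liminf hβl, hg] with t ht hgt
  rcases le_or_gt (f t) 0 with hft | hft
  · exact (mul_nonpos_of_nonneg_of_nonpos (EReal.coe_pos.1 hβ).le hft).trans hgt
  · exact ((lt_div_iff₀ hft).1 (EReal.coe_lt_coe_iff.1 ht)).le

theorem IsCompact.exists_pos_forall_mul_le {X : Type*} [TopologicalSpace X] {K : Set X}
    {f g : X → ℝ} (hK : IsCompact K) (hg : ∀ x ∈ K, 0 ≤ g x)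
    (hloc : ∀ x ∈ K, ∃ β > 0, ∀ᶠ t in 𝓝 x, β * f t ≤ g t) :
    ∃ β > 0, ∀ t ∈ K, β * f t ≤ g t := by
  -- Restricting to `K` keeps `0 ≤ g` available when two constants are replaced by their minimum.
  suffices h : ∃ β > 0, ∀ t ∈ K ∩ K, β * f t ≤ g t by simpa using h
  refine hK.induction_on (p := fun S => ∃ β > 0, ∀ t ∈ S ∩ K, β * f t ≤ g t)
    ⟨1, one_pos, by simp⟩ ?mono ?union ?nhds
  case mono =>
    rintro S T hST ⟨β, hβ, hT⟩
    exact ⟨β, hβ, fun t ht => hT t ⟨hST ht.1, ht.2⟩⟩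
  case union =>
    rintro S T ⟨β, hβ, hS⟩ ⟨β', hβ', hT⟩
    refine ⟨min β β', lt_min hβ hβ', fun t ⟨htST, htK⟩ => ?_⟩
    rcases htST with htS | htT
    · exact mul_le_of_le_of_mul_le (hg t htK) (by positivity) (min_le_left _ _) (hS t ⟨htS, htK⟩)
    · exact mul_le_of_le_of_mul_le (hg t htK) (by positivity) (min_le_right _ _) (hT t ⟨htT, htK⟩)
  case nhds =>
    intro x hx
    obtain ⟨β, hβ, hx⟩ := hloc x hx
    exact ⟨_, mem_nhdsWithin_of_mem_nhds hx, β, hβ, fun t ht => ht.1⟩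

theorem exists_pos_forall_mul_le_Ioi_of_local {f g : ℝ → ℝ} (hg : ∀ x ∈ Ioi (0 : ℝ), 0 ≤ g x)
    (hloc : ∀ x ∈ Ioi (0 : ℝ), ∃ β > 0, ∀ᶠ t in 𝓝 x, β * f t ≤ g t)
    (h₀ : ∃ β > 0, ∀ᶠ t in 𝓝[>] 0, β * f t ≤ g t) (h₁ : ∃ β > 0, ∀ᶠ t in atTop, β * f t ≤ g t) :
    ∃ β > 0, ∀ t ∈ Ioi (0 : ℝ), β * f t ≤ g t := by
  obtain ⟨β₀, hβ₀, h₀⟩ := h₀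
  obtain ⟨β₁, hβ₁, h₁⟩ := h₁
  obtain ⟨a, ha, hIoo⟩ := mem_nhdsGT_iff_exists_Ioo_subset.1 h₀
  obtain ⟨b, hIci⟩ := eventually_atTop.1 h₁
  have hIcc_pos : Icc a b ⊆ Ioi 0 := fun t ht => ha.trans_le ht.1
  obtain ⟨β₂, hβ₂, hIcc⟩ := isCompact_Icc.exists_pos_forall_mul_le
    (fun t ht => hg t (hIcc_pos ht)) (fun t ht => hloc t (hIcc_pos ht))
  refine ⟨min β₀ (min β₁ β₂), by positivity, fun t ht => ?_⟩
  have hmin : 0 ≤ min β₀ (min β₁ β₂) := by positivity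
  rcases lt_or_ge t a with hta | hat
  · exact mul_le_of_le_of_mul_le (hg t ht) hmin (min_le_left _ _) (hIoo ⟨ht, hta⟩)
  rcases le_or_gt b t with hbt | htb
  · exact mul_le_of_le_of_mul_le (hg t ht) hmin
      ((min_le_right _ _).trans (min_le_left _ _)) (hIci t hbt)
  · exact mul_le_of_le_of_mul_le (hg t ht) hmin
      ((min_le_right _ _).trans (min_le_right _ _)) (hIcc t ⟨hat, htb.le⟩)

theorem ConvexOn.pos_of_eventually_pos {E : Type*} [NormedAddCommGroup E] [NormedSpace ℝ E]
    {s : Set E} {g : E → ℝ} {x₀ x : E} (hg : ConvexOn ℝ s g) (hx₀ : x₀ ∈ s) (h₀ : g x₀ = 0)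
    (hpos : ∀ᶠ y in 𝓝[≠] x₀, 0 < g y) (hx : x ∈ s) (hne : x ≠ x₀) : 0 < g x := by
  have hline : Tendsto (AffineMap.lineMap x₀ x) (𝓝[>] (0 : ℝ)) (𝓝[≠] x₀) := by
    refine tendsto_nhdsWithin_of_tendsto_nhds_of_eventually_within _ ?_ ?_
    · simpa using ((AffineMap.lineMap_continuous (R := ℝ) (p := x₀) (q := x)).tendsto 0).mono_left
        nhdsWithin_le_nhds
    · filter_upwards [self_mem_nhdsWithin] with θ hθ
      simpa [AffineMap.lineMap_eq_left_iff, hne.symm] using hθ.ne'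
  obtain ⟨θ, hθpos, hθ⟩ :=
    ((hline.eventually hpos).and (Ioo_mem_nhdsGT one_pos)).exists
  exact hθpos.trans (hg.lt_right_of_left_lt hx₀ hx (lineMap_mem_openSegment ℝ x₀ x hθ)
    (h₀ ▸ hθpos))

theorem exists_eq_iteratedDeriv_two_mul_sq {φ : ℝ → ℝ} {x₀ x : ℝ}
    (hφ : ContDiffOn ℝ 2 φ (uIcc x₀ x)) (hd : DifferentiableAt ℝ φ x₀)
    (h₀ : φ x₀ = 0) (h₁ : deriv φ x₀ = 0) :
    ∃ ξ ∈ uIcc x₀ x, φ x = iteratedDeriv 2 φ ξ / 2 * (x - x₀) ^ 2 := by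
  rcases eq_or_ne x₀ x with rfl | hne
  · exact ⟨x₀, left_mem_uIcc, by simp [h₀]⟩
  obtain ⟨ξ, hξ, h⟩ := taylor_mean_remainder_lagrange_iteratedDeriv (n := 1) hne hφ
  have hderiv : derivWithin φ (uIcc x₀ x) x₀ = 0 := by
    rw [hd.derivWithin ((uniqueDiffOn_uIcc hne) _ left_mem_uIcc), h₁]
  refine ⟨ξ, uIoo_subset_uIcc_self hξ, ?_⟩
  norm_num [h₀] at h
  rw [hderiv] at h
  linarith

theorem ContDiffOn.continuousAt_iteratedDeriv_of_isOpen {φ : ℝ → ℝ} {s : Set ℝ} {x : ℝ} {n : ℕ}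
    (hφ : ContDiffOn ℝ n φ s) (hs : IsOpen s) (hx : x ∈ s) :
    ContinuousAt (iteratedDeriv n φ) x :=
  ((hφ.continuousOn_iteratedDerivWithin le_rfl hs.uniqueDiffOn).congr
    (iteratedDerivWithin_of_isOpen hs).symm).continuousAt (hs.mem_nhds hx)

theorem eventually_exists_mem_eq_mul_sq {φ : ℝ → ℝ} {s U : Set ℝ} {x₀ : ℝ}
    (hφ : ContDiffOn ℝ 2 φ s) (hs : IsOpen s) (hx₀ : x₀ ∈ s)
    (h₀ : φ x₀ = 0) (h₁ : deriv φ x₀ = 0) (hU : U ∈ 𝓝 (iteratedDeriv 2 φ x₀)) :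
    ∀ᶠ x in 𝓝 x₀, ∃ y ∈ U, φ x = y / 2 * (x - x₀) ^ 2 := by
  have hd : DifferentiableAt ℝ φ x₀ :=
    (hφ.differentiableOn two_ne_zero).differentiableAt (hs.mem_nhds hx₀)
  have hU' : ∀ᶠ ξ in 𝓝 x₀, iteratedDeriv 2 φ ξ ∈ U :=
    hφ.continuousAt_iteratedDeriv_of_isOpen hs hx₀ hU
  obtain ⟨ε, hε, hball⟩ := Metric.eventually_nhds_iff_ball.1 (hU'.and (hs.mem_nhds hx₀))
  filter_upwards [Metric.ball_mem_nhds x₀ hε] with x hx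
  have hsub : uIcc x₀ x ⊆ Metric.ball x₀ ε :=
    (convex_ball x₀ ε).ordConnected.uIcc_subset (Metric.mem_ball_self hε) hx
  obtain ⟨ξ, hξ, h⟩ := exists_eq_iteratedDeriv_two_mul_sq
    (hφ.mono fun y hy => (hball y (hsub hy)).2) hd h₀ h₁
  exact ⟨_, (hball ξ (hsub hξ)).1, h⟩

section SecondOrderZero

variable {φ ψ : ℝ → ℝ} {s : Set ℝ} {x₀ : ℝ}

theorem eventually_pos_of_iteratedDeriv_two_pos (hψ : ContDiffOn ℝ 2 ψ s) (hs : IsOpen s)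
    (hx₀ : x₀ ∈ s) (hψ₀ : ψ x₀ = 0) (hψ₁ : deriv ψ x₀ = 0) (hψ₂ : 0 < iteratedDeriv 2 ψ x₀) :
    ∀ᶠ x in 𝓝[≠] x₀, 0 < ψ x := by
  filter_upwards [nhdsWithin_le_nhds
      (eventually_exists_mem_eq_mul_sq hψ hs hx₀ hψ₀ hψ₁ (Ioi_mem_nhds hψ₂)),
    self_mem_nhdsWithin] with x ⟨y, hy, hψx⟩ hx
  rw [hψx]
  exact mul_pos (half_pos hy) (pow_two_pos_of_ne_zero (sub_ne_zero.2 hx))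

theorem exists_pos_eventually_mul_le_of_iteratedDeriv_two_pos
    (hφ : ContDiffOn ℝ 2 φ s) (hψ : ContDiffOn ℝ 2 ψ s) (hs : IsOpen s) (hx₀ : x₀ ∈ s)
    (hφ₀ : φ x₀ = 0) (hφ₁ : deriv φ x₀ = 0) (hψ₀ : ψ x₀ = 0) (hψ₁ : deriv ψ x₀ = 0)
    (hψ₂ : 0 < iteratedDeriv 2 ψ x₀) :
    ∃ β > 0, ∀ᶠ x in 𝓝 x₀, β * φ x ≤ ψ x := by
  set B := iteratedDeriv 2 ψ x₀
  set C := |iteratedDeriv 2 φ x₀| + 1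
  have hC : 0 < C := by positivity
  refine ⟨B / (2 * C), by positivity, ?_⟩
  filter_upwards [eventually_exists_mem_eq_mul_sq hφ hs hx₀ hφ₀ hφ₁
      (Iio_mem_nhds ((le_abs_self _).trans_lt (lt_add_one _))),
    eventually_exists_mem_eq_mul_sq hψ hs hx₀ hψ₀ hψ₁ (Ioi_mem_nhds (half_lt_self hψ₂))]
    with x ⟨z, hz, hφx⟩ ⟨y, hy, hψx⟩
  rw [hφx, hψx]
  calc B / (2 * C) * (z / 2 * (x - x₀) ^ 2) ≤ B / (2 * C) * (C / 2 * (x - x₀) ^ 2) := by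
        gcongr; exact hz.le
    _ = B / 2 / 2 * (x - x₀) ^ 2 := by field_simp
    _ ≤ y / 2 * (x - x₀) ^ 2 := by gcongr; exact hy.le

end SecondOrderZero

theorem exists_pos_forall_mul_le_of_liminf_pos {f g : ℝ → ℝ}
    (hg : ConvexOn ℝ (Ioi 0) g)
    (hfC2 : ContDiffOn ℝ 2 f (Ioi 0)) (hgC2 : ContDiffOn ℝ 2 g (Ioi 0))
    (hf1 : f 1 = 0) (hg1 : g 1 = 0) (hf'1 : deriv f 1 = 0) (hg'1 : deriv g 1 = 0)
    (hg''1 : 0 < iteratedDeriv 2 g 1)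
    (hlim0 : (0 : EReal) < liminf (fun t => ((g t / f t : ℝ) : EReal)) (𝓝[>] (0:ℝ)))
    (hlimtop : (0 : EReal) < liminf (fun t => ((g t / f t : ℝ) : EReal)) atTop) :
    ∃ β > 0, ∀ t ∈ Ioi (0 : ℝ), β * f t ≤ g t := by
  have hone : (1 : ℝ) ∈ Ioi 0 := mem_Ioi.2 one_pos
  have hg_pos : ∀ x ∈ Ioi (0 : ℝ), x ≠ 1 → 0 < g x := fun x hx hx1 =>
    hg.pos_of_eventually_pos hone hg1
      (eventually_pos_of_iteratedDeriv_two_pos hgC2 isOpen_Ioi hone hg1 hg'1 hg''1) hx hx1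
  have hg_nonneg : ∀ x ∈ Ioi (0 : ℝ), 0 ≤ g x := fun x hx => by
    rcases eq_or_ne x 1 with rfl | hx1
    · exact hg1.ge
    · exact (hg_pos x hx hx1).le
  refine exists_pos_forall_mul_le_Ioi_of_local hg_nonneg (fun x hx => ?_)
    (exists_pos_eventually_mul_le_of_liminf_pos hlim0 (eventually_nhdsWithin_of_forall hg_nonneg))
    (exists_pos_eventually_mul_le_of_liminf_pos hlimtop ((eventually_gt_atTop 0).mono hg_nonneg))
  rcases eq_or_ne x 1 with rfl | hx1
  · exact exists_pos_eventually_mul_le_of_iteratedDeriv_two_pos hfC2 hgC2 isOpen_Ioi hone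
      hf1 hf'1 hg1 hg'1 hg''1
  · exact exists_pos_eventually_mul_le_of_pos
      (hfC2.continuousOn.continuousAt (isOpen_Ioi.mem_nhds hx))
      (hgC2.continuousOn.continuousAt (isOpen_Ioi.mem_nhds hx)) (hg_pos x hx hx1)

theorem exists_beta_divergence_bound_general (f g : ℝ → ℝ)
    (hg : ConvexOn ℝ (Set.Ioi 0) g)
    (hfC2 : ContDiffOn ℝ 2 f (Set.Ioi 0)) (hgC2 : ContDiffOn ℝ 2 g (Set.Ioi 0))
    (hf1 : f 1 = 0) (hg1 : g 1 = 0)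
    (hf'1 : deriv f 1 = 0) (hg'1 : deriv g 1 = 0)
    (hg''1 : 0 < iteratedDeriv 2 g 1)
    (hlim0 : (0 : EReal) < liminf (fun t => ((g t / f t : ℝ) : EReal)) (𝓝[>] (0:ℝ)))
    (hlimtop : (0 : EReal) < liminf (fun t => ((g t / f t : ℝ) : EReal)) atTop) :
    ∃ β > (0:ℝ), ∀ (n : ℕ) (P Q : Fin n → ℝ),
      (∀ i, 0 < P i) → (∀ i, 0 < Q i) → ∑ i, P i = 1 → ∑ i, Q i = 1 →
      ∑ i, Q i * g (P i / Q i) ≥ β * ∑ i, Q i * f (P i / Q i) := by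
  obtain ⟨β, hβ, hpt⟩ := exists_pos_forall_mul_le_of_liminf_pos hg hfC2 hgC2 hf1 hg1 hf'1 hg'1
    hg''1 hlim0 hlimtop
  refine ⟨β, hβ, fun n P Q hP hQ _ _ => ?_⟩
  rw [ge_iff_le, Finset.mul_sum]
  refine Finset.sum_le_sum fun i _ => ?_
  calc β * (Q i * f (P i / Q i)) = Q i * (β * f (P i / Q i)) := by ring
    _ ≤ Q i * g (P i / Q i) :=
        mul_le_mul_of_nonneg_left (hpt _ (div_pos (hP i) (hQ i))) (hQ i).le

/-- Under regularity at `1` and positive liminfs of `g/f` at `0+` and `∞`, there is `β > 0`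
with `D_g(P,Q) ≥ β·D_f(P,Q)` for all probability vectors with strictly positive entries. -/
theorem exists_beta_divergence_bound (f g : ℝ → ℝ)
    (hf : ConvexOn ℝ (Set.Ioi 0) f) (hg : ConvexOn ℝ (Set.Ioi 0) g)
    (hfC2 : ContDiffOn ℝ 2 f (Set.Ioi 0)) (hgC2 : ContDiffOn ℝ 2 g (Set.Ioi 0))
    (hf1 : f 1 = 0) (hg1 : g 1 = 0)
    (hf'1 : deriv f 1 = 0) (hg'1 : deriv g 1 = 0)
    (hf''1 : 0 < iteratedDeriv 2 f 1) (hg''1 : 0 < iteratedDeriv 2 g 1)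
    (hlim0 : (0 : EReal) < liminf (fun t => ((g t / f t : ℝ) : EReal)) (𝓝[>] (0:ℝ)))
    (hlimtop : (0 : EReal) < liminf (fun t => ((g t / f t : ℝ) : EReal)) atTop) :
    ∃ β > (0:ℝ), ∀ (n : ℕ) (P Q : Fin n → ℝ),
      (∀ i, 0 < P i) → (∀ i, 0 < Q i) → ∑ i, P i = 1 → ∑ i, Q i = 1 →
      ∑ i, Q i * g (P i / Q i) ≥ β * ∑ i, Q i * f (P i / Q i) :=
  exists_beta_divergence_bound_general f g hg hfC2 hgC2 hf1 hg1 hf'1 hg'1 hg''1 hlim0 hlimtop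
end

section
/- For every n and all probability vectors P = (p_1,…,p_n) and Q = (q_1,…,q_n) with all q_i > 0, the power divergences of orders 2 and 3 satisfy D₃(P,Q) ≥ (2/3)·D₂(P,Q)·(D₂(P,Q) + 1). -/
open Finset

/-- The power divergence of order 2 (the χ²-divergence). -/
noncomputable def D2 {n : ℕ} (P Q : Fin n → ℝ) : ℝ := (1/2) * ∑ i, (P i - Q i)^2 / Q i

/-- The power divergence of order 3. -/
noncomputable def D3 {n : ℕ} (P Q : Fin n → ℝ) : ℝ := (1/6) * ((∑ i, (P i)^3 / (Q i)^2) - 1)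

/-!
Write `s = ∑ pᵢ²/qᵢ = 1 + 2 D₂(P,Q)` and `t = ∑ pᵢ³/qᵢ² = 1 + 6 D₃(P,Q)`. The inequality is then
exactly `s² ≤ t`, which is Cauchy–Schwarz for the factorisation `(pᵢ²/qᵢ)² = pᵢ · pᵢ³/qᵢ²`
together with `∑ pᵢ = 1`.
-/

theorem sq_sum_sq_div_le_sum_mul_sum_cube_div_sq {ι : Type*} (s : Finset ι) {p : ι → ℝ}
    (q : ι → ℝ) (hp : ∀ i ∈ s, 0 ≤ p i) :
    (∑ i ∈ s, p i ^ 2 / q i) ^ 2 ≤ (∑ i ∈ s, p i) * ∑ i ∈ s, p i ^ 3 / q i ^ 2 :=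
  sum_sq_le_sum_mul_sum_of_sq_le_mul s hp
    (fun i hi => div_nonneg (pow_nonneg (hp i hi) 3) (sq_nonneg (q i)))
    (fun i _ => (by ring : _ = _).le)

theorem sum_sq_sub_div_eq {ι : Type*} (s : Finset ι) (p : ι → ℝ) {q : ι → ℝ}
    (hq : ∀ i ∈ s, q i ≠ 0) :
    ∑ i ∈ s, (p i - q i) ^ 2 / q i = ∑ i ∈ s, p i ^ 2 / q i - 2 * ∑ i ∈ s, p i + ∑ i ∈ s, q i := by
  rw [mul_sum, ← sum_sub_distrib, ← sum_add_distrib]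
  refine sum_congr rfl fun i hi => ?_
  field_simp [hq i hi]
  ring

theorem two_mul_D2_add_one {n : ℕ} (P Q : Fin n → ℝ) (hQ : ∀ i, Q i ≠ 0)
    (hP1 : ∑ i, P i = 1) (hQ1 : ∑ i, Q i = 1) :
    2 * D2 P Q + 1 = ∑ i, P i ^ 2 / Q i := by
  rw [D2, sum_sq_sub_div_eq _ P fun i _ => hQ i, hP1, hQ1]
  ring

/-- The joint-range inequality between the power divergences of orders 2 and 3. -/
theorem D3_ge_of_D2 (n : ℕ) (P Q : Fin n → ℝ)
    (hP0 : ∀ i, 0 ≤ P i) (hQ0 : ∀ i, 0 < Q i)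
    (hP1 : ∑ i, P i = 1) (hQ1 : ∑ i, Q i = 1) :
    D3 P Q ≥ (2/3) * D2 P Q * (D2 P Q + 1) := by
  have hCS := sq_sum_sq_div_le_sum_mul_sum_cube_div_sq univ Q fun i _ => hP0 i
  rw [← two_mul_D2_add_one P Q (fun i => (hQ0 i).ne') hP1 hQ1, hP1, one_mul] at hCS
  rw [D3]
  linarith
end

section
/- For all real numbers x > 0 and y > 0 there exist n and probability vectors P = (p_1,…,p_n) and Q = (q_1,…,q_n) with all entries strictly positive such that D(P‖Q) = x and D(Q‖P) = y; together with the fact that D(P‖Q) = D(Q‖P) = 0 when P = Q, the joint range of the pair (information divergence, reversed information divergence) consists of all interior points of the first quadrant together with the point (0,0). -/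
open Finset

/-- Joint-range predicate. -/
private def JR (a b : ℝ) : Prop :=
  ∃ (n : ℕ) (P Q : Fin n → ℝ),
    (∀ i, 0 < P i) ∧ (∀ i, 0 < Q i) ∧ (∑ i, P i = 1) ∧ (∑ i, Q i = 1) ∧
    a = ∑ i, P i * Real.log (P i / Q i) ∧ b = ∑ i, Q i * Real.log (Q i / P i)

private lemma gibbs_term {p q : ℝ} (hp : 0 < p) (hq : 0 < q) :
    p - q ≤ p * Real.log (p / q) := by
  have h1 : Real.log (q / p) ≤ q / p - 1 := Real.log_le_sub_one_of_pos (by positivity)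
  have h2 : Real.log (p / q) = - Real.log (q / p) := by
    rw [← Real.log_inv]; congr 1; field_simp
  have h3 : p * Real.log (q / p) ≤ p * (q / p - 1) :=
    mul_le_mul_of_nonneg_left h1 hp.le
  have h4 : p * (q / p - 1) = q - p := by field_simp
  nlinarith [h3, h4]

private lemma gibbs_term_strict {p q : ℝ} (hp : 0 < p) (hq : 0 < q) (hne : p ≠ q) :
    p - q < p * Real.log (p / q) := by
  have h1 : Real.log (q / p) < q / p - 1 := by
    apply Real.log_lt_sub_one_of_pos (by positivity)
    intro h
    exact hne ((div_eq_one_iff_eq hp.ne').mp h).symm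
  have h2 : Real.log (p / q) = - Real.log (q / p) := by
    rw [← Real.log_inv]; congr 1; field_simp
  have h3 : p * Real.log (q / p) < p * (q / p - 1) :=
    (mul_lt_mul_iff_right₀ hp).mpr h1
  have h4 : p * (q / p - 1) = q - p := by field_simp
  nlinarith [h3, h4]

private lemma gibbs_pos {n : ℕ} {P Q : Fin n → ℝ} (hP : ∀ i, 0 < P i) (hQ : ∀ i, 0 < Q i)
    (hsP : ∑ i, P i = 1) (hsQ : ∑ i, Q i = 1) (hne : P ≠ Q) :
    0 < ∑ i, P i * Real.log (P i / Q i) := by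
  obtain ⟨j, hj⟩ : ∃ j, P j ≠ Q j := by
    by_contra h
    push_neg at h
    exact hne (funext h)
  have h0 : (0:ℝ) = ∑ i, (P i - Q i) := by rw [Finset.sum_sub_distrib, hsP, hsQ]; ring
  rw [h0]
  refine Finset.sum_lt_sum (fun i _ => gibbs_term (hP i) (hQ i)) ⟨j, Finset.mem_univ j, ?_⟩
  exact gibbs_term_strict (hP j) (hQ j) hj

private lemma jr_swap {a b : ℝ} (h : JR a b) : JR b a := by
  obtain ⟨n, P, Q, hP, hQ, hsP, hsQ, h1, h2⟩ := h
  exact ⟨n, Q, P, hQ, hP, hsQ, hsP, h2, h1⟩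

private lemma jr_diag (d : ℝ) (hd : 0 ≤ d) : JR d d := by
  rcases eq_or_lt_of_le hd with h0 | hd
  · refine ⟨1, (fun _ => 1), (fun _ => 1), fun _ => one_pos, fun _ => one_pos, by simp, by simp,
      ?_, ?_⟩ <;> simp [← h0]
  · -- use P = (p, 1-p), Q = (1-p, p) with (2p-1) log(p/(1-p)) = d
    set E := Real.exp (2 * d) with hE
    set b := max (3/4 : ℝ) (E / (1 + E)) with hb
    have hE0 : 0 < E := Real.exp_pos _
    have hb1 : b < 1 := by
      apply max_lt (by norm_num)
      rw [div_lt_one (by positivity)]; linarith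
    have hbhalf : (1/2 : ℝ) ≤ b := le_trans (by norm_num) (le_max_left _ _)
    set m : ℝ → ℝ := fun p => (2 * p - 1) * (Real.log p - Real.log (1 - p)) with hm
    have hcont : ContinuousOn m (Set.Icc (1/2 : ℝ) b) := by
      apply ContinuousOn.mul (by fun_prop)
      apply ContinuousOn.sub
      · apply ContinuousOn.log continuousOn_id
        intro x hx
        have := hx.1
        simp only [id]
        linarith
      · apply ContinuousOn.log (by fun_prop)
        intro x hx
        have := hx.2
        have : x < 1 := lt_of_le_of_lt this hb1
        intro h; linarith [sub_eq_zero.mp h]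
    have hm2 : m (1/2) = 0 := by simp [hm]
    have hmb : d ≤ m b := by
      have h34 : (3/4 : ℝ) ≤ b := le_max_left _ _
      have hEb : E / (1 + E) ≤ b := le_max_right _ _
      have hbpos : 0 < b := by linarith
      have h1b : 0 < 1 - b := by linarith
      have hratio : E ≤ b / (1 - b) := by
        rw [le_div_iff₀ h1b]
        rw [div_le_iff₀ (by positivity)] at hEb
        nlinarith
      have hlog : 2 * d ≤ Real.log b - Real.log (1 - b) := by
        rw [← Real.log_div hbpos.ne' h1b.ne']
        calc 2 * d = Real.log E := by rw [hE, Real.log_exp]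
        _ ≤ _ := Real.log_le_log hE0 hratio
      have h2b : (1/2 : ℝ) ≤ 2 * b - 1 := by linarith
      have hd2 : 0 ≤ 2 * d := by linarith
      calc d = (1/2) * (2 * d) := by ring
      _ ≤ (2 * b - 1) * (Real.log b - Real.log (1 - b)) := by
          apply mul_le_mul h2b hlog hd2 (by linarith)
      _ = m b := rfl
    obtain ⟨p, hp_mem, hpd⟩ := intermediate_value_Icc hbhalf hcont ⟨by rw [hm2]; exact hd.le, hmb⟩
    have hp0 : 0 < p := lt_of_lt_of_le (by norm_num) hp_mem.1
    have hp1 : p < 1 := lt_of_le_of_lt hp_mem.2 hb1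
    have h1p : 0 < 1 - p := by linarith
    refine ⟨2, ![p, 1-p], ![1-p, p], ?_, ?_, ?_, ?_, ?_, ?_⟩
    · intro i; fin_cases i <;> simpa
    · intro i; fin_cases i <;> simpa
    · simp [Fin.sum_univ_two]
    · simp [Fin.sum_univ_two]
    · rw [Fin.sum_univ_two]
      simp only [Matrix.cons_val_zero, Matrix.cons_val_one, Matrix.head_cons]
      rw [Real.log_div hp0.ne' h1p.ne', Real.log_div h1p.ne' hp0.ne']
      rw [← hpd]; simp only [hm]; ring
    · rw [Fin.sum_univ_two]
      simp only [Matrix.cons_val_zero, Matrix.cons_val_one, Matrix.head_cons]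
      rw [Real.log_div hp0.ne' h1p.ne', Real.log_div h1p.ne' hp0.ne']
      rw [← hpd]; simp only [hm]; ring

private lemma jr_mix {a b c d l : ℝ} (hab : JR a b) (hcd : JR c d) (hl : 0 < l) (hl1 : l < 1) :
    JR (l * a + (1 - l) * c) (l * b + (1 - l) * d) := by
  obtain ⟨n, P1, Q1, hP1, hQ1, hsP1, hsQ1, ha, hb⟩ := hab
  obtain ⟨m, P2, Q2, hP2, hQ2, hsP2, hsQ2, hc, hd⟩ := hcd
  have hl' : 0 < 1 - l := by linarith
  refine ⟨n + m, Fin.append (fun i => l * P1 i) (fun i => (1-l) * P2 i),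
    Fin.append (fun i => l * Q1 i) (fun i => (1-l) * Q2 i), ?_, ?_, ?_, ?_, ?_, ?_⟩
  · intro i
    induction i using Fin.addCases with
    | left j => rw [Fin.append_left]; exact mul_pos hl (hP1 j)
    | right j => rw [Fin.append_right]; exact mul_pos hl' (hP2 j)
  · intro i
    induction i using Fin.addCases with
    | left j => rw [Fin.append_left]; exact mul_pos hl (hQ1 j)
    | right j => rw [Fin.append_right]; exact mul_pos hl' (hQ2 j)
  · rw [Fin.sum_univ_add]
    simp only [Fin.append_left, Fin.append_right, ← Finset.mul_sum, hsP1, hsP2]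
    ring
  · rw [Fin.sum_univ_add]
    simp only [Fin.append_left, Fin.append_right, ← Finset.mul_sum, hsQ1, hsQ2]
    ring
  · rw [Fin.sum_univ_add]
    simp only [Fin.append_left, Fin.append_right]
    have e1 : ∀ j : Fin n, l * P1 j * Real.log (l * P1 j / (l * Q1 j))
        = l * (P1 j * Real.log (P1 j / Q1 j)) := by
      intro j; rw [mul_div_mul_left _ _ hl.ne']; ring
    have e2 : ∀ j : Fin m, (1-l) * P2 j * Real.log ((1-l) * P2 j / ((1-l) * Q2 j))
        = (1-l) * (P2 j * Real.log (P2 j / Q2 j)) := by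
      intro j; rw [mul_div_mul_left _ _ hl'.ne']; ring
    simp only [e1, e2, ← Finset.mul_sum, ← ha, ← hc]
  · rw [Fin.sum_univ_add]
    simp only [Fin.append_left, Fin.append_right]
    have e1 : ∀ j : Fin n, l * Q1 j * Real.log (l * Q1 j / (l * P1 j))
        = l * (Q1 j * Real.log (Q1 j / P1 j)) := by
      intro j; rw [mul_div_mul_left _ _ hl.ne']; ring
    have e2 : ∀ j : Fin m, (1-l) * Q2 j * Real.log ((1-l) * Q2 j / ((1-l) * P2 j))
        = (1-l) * (Q2 j * Real.log (Q2 j / P2 j)) := by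
      intro j; rw [mul_div_mul_left _ _ hl'.ne']; ring
    simp only [e1, e2, ← Finset.mul_sum, ← hb, ← hd]

private lemma jr_big (M : ℝ) : ∃ A B, JR A B ∧ M < A ∧ 0 < B ∧ B < Real.log 2 := by
  set c := max M 0 + Real.log 2 + 1 with hc
  set q := Real.exp (-(2 * c)) with hq
  have hlog2 : 0 < Real.log 2 := Real.log_pos (by norm_num)
  have hc1 : 1 < c := by
    have := le_max_right M 0; nlinarith
  have hq0 : 0 < q := Real.exp_pos _
  have hqhalf : q < 1/2 := by
    have : q < Real.exp 0 := Real.exp_lt_exp.mpr (by linarith)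
    rw [Real.exp_zero] at this
    -- q = exp(-(2c)) ≤ exp (-2) < 1/2
    have h2 : q ≤ Real.exp (-2) := Real.exp_le_exp.mpr (by linarith)
    have h3 : Real.exp (-2) < 1/2 := by
      have h4 : (3:ℝ) ≤ Real.exp 2 := by nlinarith [Real.add_one_le_exp (2:ℝ)]
      rw [Real.exp_neg]
      rw [inv_lt_comm₀ (by positivity) (by norm_num)]
      linarith
    linarith
  have h1q : 1/2 < 1 - q := by linarith
  have h1q0 : 0 < 1 - q := by linarith
  have hlogq : Real.log q = -(2 * c) := Real.log_exp _
  refine ⟨_, _, ⟨2, ![1/2, 1/2], ![q, 1-q], ?_, ?_, ?_, ?_, rfl, rfl⟩, ?_, ?_, ?_⟩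
  · intro i; fin_cases i <;> norm_num
  · intro i; fin_cases i <;> simp <;> linarith
  · simp [Fin.sum_univ_two]; norm_num
  · simp [Fin.sum_univ_two]
  · -- A bound
    rw [Fin.sum_univ_two]
    simp only [Matrix.cons_val_zero, Matrix.cons_val_one, Matrix.head_cons]
    rw [Real.log_div (by norm_num) hq0.ne', Real.log_div (by norm_num) h1q0.ne']
    have hloghalf : Real.log (1/2) = - Real.log 2 := by rw [one_div, Real.log_inv]
    have hlog1q : Real.log (1 - q) ≤ 0 := Real.log_nonpos h1q0.le (by linarith)
    rw [hloghalf, hlogq]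
    have hM : M ≤ max M 0 := le_max_left M 0
    nlinarith
  · -- B > 0 by Gibbs
    apply gibbs_pos (P := ![q, 1-q]) (Q := ![1/2, 1/2])
    · intro i; fin_cases i <;> simp <;> linarith
    · intro i; fin_cases i <;> norm_num
    · simp [Fin.sum_univ_two]
    · simp [Fin.sum_univ_two]; norm_num
    · intro h
      have := congrFun h 0
      simp at this
      linarith
  · -- B < log 2
    rw [Fin.sum_univ_two]
    simp only [Matrix.cons_val_zero, Matrix.cons_val_one, Matrix.head_cons]
    rw [Real.log_div hq0.ne' (by norm_num), Real.log_div h1q0.ne' (by norm_num)]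
    have hloghalf : Real.log (1/2) = - Real.log 2 := by rw [one_div, Real.log_inv]
    rw [hloghalf]
    have hlq : Real.log q < 0 := Real.log_neg hq0 (by linarith)
    have hl1q : Real.log (1 - q) < 0 := Real.log_neg h1q0 (by linarith)
    nlinarith

private lemma jr_main {x y : ℝ} (hy : 0 < y) (hxy : y < x) : JR x y := by
  have hlog2 : 0 < Real.log 2 := Real.log_pos (by norm_num)
  obtain ⟨A, B, hAB, hA, hB0, hB2⟩ :=
    jr_big (max (x - y + Real.log 2) (x * Real.log 2 / y))
  have hA1 : x - y + Real.log 2 < A := lt_of_le_of_lt (le_max_left _ _) hA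
  have hA2 : x * Real.log 2 / y < A := lt_of_le_of_lt (le_max_right _ _) hA
  have hABd : x - y < A - B := by linarith
  have hAB0 : 0 < A - B := by linarith
  set l := (x - y) / (A - B) with hl
  have hl0 : 0 < l := div_pos (by linarith) hAB0
  have hl1 : l < 1 := (div_lt_one hAB0).mpr hABd
  have h1l : 0 < 1 - l := by linarith
  have hyA : x * B < y * A := by
    have h := (div_lt_iff₀ hy).mp hA2
    nlinarith
  have hlA : l * A < x := by
    rw [hl, div_mul_eq_mul_div, div_lt_iff₀ hAB0]
    nlinarith
  set d := (x - l * A) / (1 - l) with hd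
  have hd0 : 0 ≤ d := div_nonneg (by linarith) h1l.le
  have h1 : (1 - l) * d = x - l * A := by
    rw [hd, mul_comm, div_mul_cancel₀ _ h1l.ne']
  have h2 : l * (A - B) = x - y := by
    rw [hl, div_mul_cancel₀ _ hAB0.ne']
  have key := jr_mix hAB (jr_diag d hd0) hl0 hl1
  have ex : l * A + (1 - l) * d = x := by linear_combination h1
  have ey : l * B + (1 - l) * d = y := by linear_combination h1 - h2
  rwa [ex, ey] at key

private lemma jr_pos {x y : ℝ} (hx : 0 < x) (hy : 0 < y) : JR x y := by
  rcases lt_trichotomy x y with h | h | h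
  · exact jr_swap (jr_main hx h)
  · rw [h]; exact jr_diag y hy.le
  · exact jr_main hy h

/-- The joint range of the pair (information divergence, reversed information divergence)
consists of all interior points of the first quadrant together with the point `(0,0)`. -/
theorem jointRange_KL_reversedKL :
    {xy : ℝ × ℝ | ∃ (n : ℕ) (P Q : Fin n → ℝ),
        (∀ i, 0 < P i) ∧ (∀ i, 0 < Q i) ∧ (∑ i, P i = 1) ∧ (∑ i, Q i = 1) ∧
        xy.1 = ∑ i, P i * Real.log (P i / Q i) ∧
        xy.2 = ∑ i, Q i * Real.log (Q i / P i)}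
      = {xy : ℝ × ℝ | 0 < xy.1 ∧ 0 < xy.2} ∪ {((0:ℝ), (0:ℝ))} := by
  ext xy
  simp only [Set.mem_setOf_eq, Set.mem_union, Set.mem_singleton_iff]
  constructor
  · rintro ⟨n, P, Q, hP, hQ, hsP, hsQ, h1, h2⟩
    by_cases hPQ : P = Q
    · right
      subst hPQ
      have hz : ∀ i : Fin n, P i * Real.log (P i / P i) = 0 := by
        intro i; rw [div_self (hP i).ne']; simp
      have : xy.1 = 0 := by rw [h1]; simp [hz]
      have : xy.2 = 0 := by rw [h2]; simp [hz]
      exact Prod.ext (by assumption) (by assumption)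
    · left
      refine ⟨?_, ?_⟩
      · rw [h1]; exact gibbs_pos hP hQ hsP hsQ hPQ
      · rw [h2]; exact gibbs_pos hQ hP hsQ hsP (Ne.symm hPQ)
  · rintro (⟨hx, hy⟩ | h)
    · obtain ⟨n, P, Q, h⟩ := jr_pos hx hy
      exact ⟨n, P, Q, h⟩
    · rw [h]
      exact ⟨1, fun _ => 1, fun _ => 1, fun _ => one_pos, fun _ => one_pos, by simp, by simp,
        by simp, by simp⟩
end

section
/- For every γ ∈ ℝ and every M ∈ ℝ there exist p, q ∈ (0,1) such that, with P = (p, 1−p) and Q = (q, 1−q), one has D(Q‖P) − γ·D(P‖Q) > M; that is, the supremum of D(Q‖P) − γ·D(P‖Q) over two-point distributions is infinite for every real γ. -/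
/-- For every real `γ`, the supremum of `D(Q‖P) − γ·D(P‖Q)` over two-point distributions
is infinite. -/
theorem sup_reversedKL_sub_gamma_KL_eq_top (γ M : ℝ) :
    ∃ p q : ℝ, p ∈ Set.Ioo (0:ℝ) 1 ∧ q ∈ Set.Ioo (0:ℝ) 1 ∧
      (q * Real.log (q / p) + (1 - q) * Real.log ((1 - q) / (1 - p)))
        - γ * (p * Real.log (p / q) + (1 - p) * Real.log ((1 - p) / (1 - q))) > M := by
  set c : ℝ := 2 * (|M| + 3 * |γ| + 3) with hc
  have hcpos : 0 < c := by positivity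
  refine ⟨Real.exp (-c), 1/2, ⟨Real.exp_pos _, ?_⟩, ⟨by norm_num, by norm_num⟩, ?_⟩
  · have : Real.exp (-c) < Real.exp 0 := Real.exp_lt_exp.2 (by linarith)
    simpa using this
  set p : ℝ := Real.exp (-c) with hp
  have hp0 : 0 < p := Real.exp_pos _
  have hp1 : p < 1 := by
    have : Real.exp (-c) < Real.exp 0 := Real.exp_lt_exp.2 (by linarith)
    simpa [hp] using this
  have hlogp : Real.log p = -c := Real.log_exp _
  have h1p : (0:ℝ) < 1 - p := by linarith
  have hlog2 : (0:ℝ) < Real.log 2 := Real.log_pos (by norm_num)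
  have hlog2' : Real.log 2 ≤ 1 := by
    have := Real.log_le_sub_one_of_pos (show (0:ℝ) < 2 by norm_num); linarith
  -- log of 1-p nonpositive
  have hl1p : Real.log (1 - p) ≤ 0 := Real.log_nonpos (by linarith) (by linarith)
  -- x log x ≥ x - 1 for x > 0
  have key : ∀ x : ℝ, 0 < x → x - 1 ≤ x * Real.log x := by
    intro x hx
    have h := Real.log_le_sub_one_of_pos (show 0 < x⁻¹ by positivity)
    rw [Real.log_inv] at h
    have : -Real.log x ≤ x⁻¹ - 1 := h
    nlinarith [mul_pos hx (inv_pos.2 hx), mul_inv_cancel₀ (ne_of_gt hx)]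
  have hA := key p hp0
  have hB := key (1 - p) h1p
  have hA' : p * Real.log p ≤ 0 :=
    mul_nonpos_of_nonneg_of_nonpos hp0.le (Real.log_nonpos hp0.le hp1.le)
  have hB' : (1 - p) * Real.log (1 - p) ≤ 0 :=
    mul_nonpos_of_nonneg_of_nonpos h1p.le hl1p
  rw [hlogp] at hA hA'
  -- rewrite the logs
  have e1 : Real.log ((1/2 : ℝ) / p) = -Real.log 2 + c := by
    rw [Real.log_div (by norm_num) (ne_of_gt hp0), hlogp]
    rw [show (1/2 : ℝ) = 2⁻¹ by norm_num, Real.log_inv]; ring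
  have e2 : Real.log ((1 - (1/2 : ℝ)) / (1 - p)) = -Real.log 2 - Real.log (1 - p) := by
    rw [show (1 - (1/2:ℝ)) = 2⁻¹ by norm_num,
      Real.log_div (by norm_num) (ne_of_gt h1p), Real.log_inv]
  have e3 : Real.log (p / (1/2 : ℝ)) = -c + Real.log 2 := by
    rw [Real.log_div (ne_of_gt hp0) (by norm_num), hlogp,
      show (1/2 : ℝ) = 2⁻¹ by norm_num, Real.log_inv]; ring
  have e4 : Real.log ((1 - p) / (1 - (1/2 : ℝ))) = Real.log (1 - p) + Real.log 2 := by
    rw [show (1 - (1/2:ℝ)) = 2⁻¹ by norm_num,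
      Real.log_div (ne_of_gt h1p) (by norm_num), Real.log_inv]; ring
  rw [e1, e2, e3, e4]
  have habsM : M ≤ |M| := le_abs_self M
  have habsγ : γ ≤ |γ| := le_abs_self γ
  have habsγ' : -γ ≤ |γ| := neg_le_abs γ
  have hγ0 : 0 ≤ |γ| := abs_nonneg γ
  -- B = p*(-c+log2) + (1-p)*(log(1-p)+log2) ∈ [log2 - 2, log2]
  have hBlo : Real.log 2 - 2 ≤ p * (-c + Real.log 2) + (1 - p) * (Real.log (1 - p) + Real.log 2) := by
    nlinarith
  have hBhi : p * (-c + Real.log 2) + (1 - p) * (Real.log (1 - p) + Real.log 2) ≤ Real.log 2 := by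
    nlinarith
  have hγB : -γ * (p * (-c + Real.log 2) + (1 - p) * (Real.log (1 - p) + Real.log 2)) ≥ -3 * |γ| := by
    rcases le_total 0 γ with h | h
    · have := mul_le_mul_of_nonneg_left hBhi h
      have h2 : γ ≤ |γ| := habsγ
      nlinarith
    · have := mul_le_mul_of_nonpos_left hBlo h
      nlinarith
  nlinarith [hγB]
end
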